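/- arXiv:1208.3164 — 6 statements merged into one kernel-verified Lean document; each statement's English description precedes it below -/
import Mathlib

section
/- If Z and Y are nonnegative random variables with E(Z | Y) = Y, then E|Z - Y| ≤ sqrt(2 E Z) · sqrt(E(Z log Z) - E(Y log Y)). -/
/-!
The pointwise divergence `D = Y klFun (Z / Y) = Z log Z - Z log Y - Z + Y` is nonnegative, and the
tower property applied to the `Y`-measurable factor `log Y` gives `E D = E(Z log Z) - E(Y log Y)`.
Rescaling the scalar inequality `3 (t - 1)² ≤ (2t + 4) klFun t` yields
`(Z - Y)² ≤ (2Z + 4Y)/3 · D`, and Cauchy–Schwarz with `E (2Z + 4Y)/3 = 2 E Z` concludes.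
-/

open MeasureTheory Real
open scoped ENNReal

namespace InformationTheory

theorem monotoneOn_add_one_mul_log_sub :
    MonotoneOn (fun t : ℝ => (t + 1) * log t - 2 * (t - 1)) (Set.Ioi 0) := by
  have hderiv : ∀ t ∈ Set.Ioi (0 : ℝ),
      HasDerivAt (fun t : ℝ => (t + 1) * log t - 2 * (t - 1)) (log t + (t + 1) * t⁻¹ - 2) t :=
    fun t ht => ((((hasDerivAt_id' t).add_const 1).mul (hasDerivAt_log (ne_of_gt ht))).sub
      (((hasDerivAt_id' t).sub_const 1).const_mul 2)).congr_deriv (by ring)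
  refine monotoneOn_of_deriv_nonneg (convex_Ioi 0)
    (fun t ht => (hderiv t ht).continuousAt.continuousWithinAt) ?_ ?_ <;> rw [interior_Ioi]
  · exact fun t ht => (hderiv t ht).differentiableAt.differentiableWithinAt
  · intro t ht
    rw [(hderiv t ht).deriv]
    have hlog : log t⁻¹ ≤ t⁻¹ - 1 := log_le_sub_one_of_pos (inv_pos.2 ht)
    rw [log_inv] at hlog
    have : t * t⁻¹ = 1 := mul_inv_cancel₀ (ne_of_gt ht)
    linarith

/-- The derivative of `(2t + 4) klFun t - 3 (t - 1)²` is `4 ((t + 1) log t - 2 (t - 1))`, which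
changes sign from `-` to `+` at `t = 1`. -/
theorem three_mul_sq_sub_one_le_mul_klFun {t : ℝ} (ht : 0 ≤ t) :
    3 * (t - 1) ^ 2 ≤ (2 * t + 4) * klFun t := by
  set G : ℝ → ℝ := fun t => (2 * t + 4) * klFun t - 3 * (t - 1) ^ 2
  have hG : Continuous G := by fun_prop
  have hderiv : ∀ x ∈ Set.Ioi (0 : ℝ), HasDerivAt G (4 * ((x + 1) * log x - 2 * (x - 1))) x := by
    intro x hx
    refine (((((hasDerivAt_id' x).const_mul 2).add_const 4).mul
      (hasDerivAt_klFun (ne_of_gt hx))).sub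
      ((((hasDerivAt_id' x).sub_const 1).pow 2).const_mul 3)).congr_deriv ?_
    simp only [klFun_apply]
    ring
  have hmono := monotoneOn_add_one_mul_log_sub
  have h1 : (1 : ℝ) ∈ Set.Ioi 0 := Set.mem_Ioi.2 one_pos
  have hmin : IsMinOn G (Set.Ici 0) 1 := by
    refine isMinOn_Ici_of_deriv hG.continuousAt hG.continuousAt ?_ ?_ ?_ ?_
    · exact fun x hx => (hderiv x hx.1).differentiableAt.differentiableWithinAt
    · exact fun x hx =>
        (hderiv x (Set.mem_Ioi.2 (one_pos.trans hx))).differentiableAt.differentiableWithinAt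
    · intro x hx
      have := hmono hx.1 h1 hx.2.le
      rw [(hderiv x hx.1).deriv]
      simp only [log_one] at this
      linarith
    · intro x hx
      have hx0 : x ∈ Set.Ioi 0 := Set.mem_Ioi.2 (one_pos.trans hx)
      have := hmono h1 hx0 hx.le
      rw [(hderiv x hx0).deriv]
      simp only [log_one] at this
      linarith
  have : G 1 ≤ G t := hmin ht
  simp only [G, klFun_one] at this
  linarith

theorem mul_klFun_div {a b : ℝ} (hab : b = 0 → a = 0) :
    b * klFun (a / b) = a * log a - a * log b - a + b := by
  rcases eq_or_ne b 0 with rfl | hb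
  · simp [hab rfl]
  rcases eq_or_ne a 0 with rfl | ha
  · simp [klFun_zero]
  rw [klFun_apply, log_div ha hb]
  field_simp
  ring

theorem three_mul_sq_sub_le_mul_mul_klFun_div {a b : ℝ} (ha : 0 ≤ a) (hb : 0 ≤ b)
    (hab : b = 0 → a = 0) : 3 * (a - b) ^ 2 ≤ (2 * a + 4 * b) * (b * klFun (a / b)) := by
  rcases hb.eq_or_lt with rfl | hb
  · simp [hab rfl]
  calc 3 * (a - b) ^ 2 = b ^ 2 * (3 * (a / b - 1) ^ 2) := by field_simp
    _ ≤ b ^ 2 * ((2 * (a / b) + 4) * klFun (a / b)) :=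
      mul_le_mul_of_nonneg_left (three_mul_sq_sub_one_le_mul_klFun (div_nonneg ha hb.le))
        (sq_nonneg b)
    _ = (2 * a + 4 * b) * (b * klFun (a / b)) := by field_simp

end InformationTheory

open InformationTheory

theorem integral_abs_le_sqrt_mul_sqrt {Ω : Type*} [MeasurableSpace Ω] {μ : Measure Ω}
    {f a d : Ω → ℝ} (ha : Integrable a μ) (hd : Integrable d μ)
    (ha0 : 0 ≤ᵐ[μ] a) (hd0 : 0 ≤ᵐ[μ] d) (h : ∀ᵐ ω ∂μ, f ω ^ 2 ≤ a ω * d ω) :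
    ∫ ω, |f ω| ∂μ ≤ √(∫ ω, a ω ∂μ) * √(∫ ω, d ω ∂μ) := by
  have hsqrt : ∀ {g : Ω → ℝ}, Integrable g μ → 0 ≤ᵐ[μ] g →
      MemLp (fun ω => √(g ω)) 2 μ ∧ (fun ω => √(g ω) ^ (2 : ℝ)) =ᵐ[μ] g := by
    intro g hg hg0
    have hsq : (fun ω => √(g ω) ^ 2) =ᵐ[μ] g := by
      filter_upwards [hg0] with ω hω using sq_sqrt hω
    refine ⟨(memLp_two_iff_integrable_sq (continuous_sqrt.comp_aestronglyMeasurable hg.1)).2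
      (hg.congr hsq.symm), ?_⟩
    simpa only [rpow_two] using hsq
  obtain ⟨ha2, ha2'⟩ := hsqrt ha ha0
  obtain ⟨hd2, hd2'⟩ := hsqrt hd hd0
  have hholder := integral_mul_le_Lp_mul_Lq_of_nonneg Real.HolderConjugate.two_two
    (ae_of_all _ fun ω => sqrt_nonneg (a ω)) (ae_of_all _ fun ω => sqrt_nonneg (d ω))
    (by simpa using ha2) (by simpa using hd2)
  rw [integral_congr_ae ha2', integral_congr_ae hd2', ← sqrt_eq_rpow, ← sqrt_eq_rpow] at hholder
  refine le_trans (integral_mono_of_nonneg (ae_of_all _ fun ω => abs_nonneg (f ω))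
    (ha2.integrable_mul hd2) ?_) hholder
  filter_upwards [h, ha0] with ω hω ha0ω
  simpa only [Pi.mul_apply, sqrt_mul ha0ω] using abs_le_sqrt hω

section CondExp

variable {Ω : Type*} {m m0 : MeasurableSpace Ω} {μ : Measure Ω} {Z Y : Ω → ℝ}

theorem ae_nonneg_of_condExp_eq (hZ0 : 0 ≤ᵐ[μ] Z) (hcond : μ[Z|m] =ᵐ[μ] Y) : 0 ≤ᵐ[μ] Y := by
  filter_upwards [condExp_nonneg hZ0, hcond] with ω h h' using h' ▸ h

/-- The measures `ofReal Z • μ` and `ofReal Y • μ` agree on `m`, hence integrate every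
`m`-measurable function alike; no integrability of the product is needed. -/
theorem lintegral_ofReal_mul_eq_of_condExp_eq (hm : m ≤ m0) [SigmaFinite (μ.trim hm)]
    (hZ : Integrable Z μ) (hZ0 : 0 ≤ᵐ[μ] Z) (hcond : μ[Z|m] =ᵐ[μ] Y)
    {φ : Ω → ℝ≥0∞} (hφ : Measurable[m] φ) :
    ∫⁻ ω, ENNReal.ofReal (Z ω) * φ ω ∂μ = ∫⁻ ω, ENNReal.ofReal (Y ω) * φ ω ∂μ := by
  have hY : Integrable Y μ := integrable_condExp.congr hcond
  have hY0 := ae_nonneg_of_condExp_eq hZ0 hcond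
  have htrim : (μ.withDensity fun ω => ENNReal.ofReal (Z ω)).trim hm
      = (μ.withDensity fun ω => ENNReal.ofReal (Y ω)).trim hm := by
    refine @Measure.ext _ m _ _ fun s hs => ?_
    rw [trim_measurableSet_eq hm hs, trim_measurableSet_eq hm hs,
      withDensity_apply _ (hm s hs), withDensity_apply _ (hm s hs),
      ← ofReal_integral_eq_lintegral_ofReal hZ.restrict (ae_restrict_of_ae hZ0),
      ← ofReal_integral_eq_lintegral_ofReal hY.restrict (ae_restrict_of_ae hY0),
      ← setIntegral_condExp hm hZ hs, setIntegral_congr_ae (hm s hs) (hcond.mono fun _ h _ => h)]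
  have hdens : ∀ {X : Ω → ℝ}, Integrable X μ →
      ∫⁻ ω, ENNReal.ofReal (X ω) * φ ω ∂μ
        = ∫⁻ ω, φ ω ∂(μ.withDensity fun ω => ENNReal.ofReal (X ω)).trim hm := fun hX => by
    rw [lintegral_trim hm hφ, lintegral_withDensity_eq_lintegral_mul₀
      hX.1.aemeasurable.ennreal_ofReal (hφ.mono hm le_rfl).aemeasurable]
    rfl
  rw [hdens hZ, hdens hY, htrim]

theorem integrable_mul_of_condExp_eq (hm : m ≤ m0) [SigmaFinite (μ.trim hm)]
    (hZ : Integrable Z μ) (hZ0 : 0 ≤ᵐ[μ] Z) (hcond : μ[Z|m] =ᵐ[μ] Y)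
    {g : Ω → ℝ} (hg : StronglyMeasurable[m] g) (hYg : Integrable (Y * g) μ) :
    Integrable (Z * g) μ := by
  refine ⟨hZ.1.mul (hg.mono hm).aestronglyMeasurable, ?_⟩
  have henorm : ∀ {X : Ω → ℝ}, 0 ≤ᵐ[μ] X →
      ∫⁻ ω, ‖(X * g) ω‖ₑ ∂μ = ∫⁻ ω, ENNReal.ofReal (X ω) * ‖g ω‖ₑ ∂μ := fun hX0 =>
    lintegral_congr_ae <| by
      filter_upwards [hX0] with ω hω
      rw [Pi.mul_apply, enorm_mul, Real.enorm_of_nonneg hω]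
  have hφ : Measurable[m] fun ω => ‖g ω‖ₑ := measurable_enorm.comp hg.measurable
  have := hYg.2
  rwa [HasFiniteIntegral, henorm (ae_nonneg_of_condExp_eq hZ0 hcond),
    ← lintegral_ofReal_mul_eq_of_condExp_eq hm hZ hZ0 hcond hφ, ← henorm hZ0] at this

theorem integral_mul_eq_of_condExp_eq (hm : m ≤ m0) [SigmaFinite (μ.trim hm)]
    (hZ : Integrable Z μ) (hZ0 : 0 ≤ᵐ[μ] Z) (hcond : μ[Z|m] =ᵐ[μ] Y)
    {g : Ω → ℝ} (hg : StronglyMeasurable[m] g) (hYg : Integrable (Y * g) μ) :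
    ∫ ω, Z ω * g ω ∂μ = ∫ ω, Y ω * g ω ∂μ := by
  have hZg := integrable_mul_of_condExp_eq hm hZ hZ0 hcond hg hYg
  calc ∫ ω, Z ω * g ω ∂μ = ∫ ω, (μ[Z * g|m]) ω ∂μ := (integral_condExp hm).symm
    _ = ∫ ω, Y ω * g ω ∂μ := integral_congr_ae <|
      (condExp_mul_of_stronglyMeasurable_right hg hZg hZ).trans (hcond.mul (ae_eq_refl g))

theorem ae_eq_zero_of_condExp_eq_zero (hm : m ≤ m0) [SigmaFinite (μ.trim hm)]
    (hZ : Integrable Z μ) (hZ0 : 0 ≤ᵐ[μ] Z) (hcond : μ[Z|m] =ᵐ[μ] Y)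
    (hY : StronglyMeasurable[m] Y) : ∀ᵐ ω ∂μ, Y ω = 0 → Z ω = 0 := by
  set s := {ω | Y ω = 0}
  have hs : MeasurableSet[m] s := hY.measurableSet_eq_fun stronglyMeasurable_const
  have hφ : Measurable[m] (s.indicator fun _ => (1 : ℝ≥0∞)) := measurable_const.indicator hs
  have hYs : ∫⁻ ω, ENNReal.ofReal (Y ω) * s.indicator (fun _ => 1) ω ∂μ = 0 := by
    refine lintegral_eq_zero_of_ae_eq_zero (ae_of_all _ fun ω => ?_)
    by_cases hω : ω ∈ s <;> simp_all [s]
  rw [← lintegral_ofReal_mul_eq_of_condExp_eq hm hZ hZ0 hcond hφ] at hYs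
  have hZs := (lintegral_eq_zero_iff' (hZ.1.aemeasurable.ennreal_ofReal.mul
    (hφ.mono hm le_rfl).aemeasurable)).1 hYs
  filter_upwards [hZs, hZ0] with ω hω hω0 hYω
  simp only [Pi.mul_apply, Set.indicator_of_mem (show ω ∈ s from hYω), mul_one, Pi.zero_apply,
    ENNReal.ofReal_eq_zero] at hω
  exact le_antisymm hω hω0

theorem mul_klFun_div_ae_eq_of_condExp_eq (hm : m ≤ m0) [SigmaFinite (μ.trim hm)]
    (hZ : Integrable Z μ) (hZ0 : 0 ≤ᵐ[μ] Z) (hcond : μ[Z|m] =ᵐ[μ] Y)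
    (hY : StronglyMeasurable[m] Y) :
    (fun ω => Y ω * klFun (Z ω / Y ω))
      =ᵐ[μ] fun ω => Z ω * log (Z ω) - Z ω * log (Y ω) - Z ω + Y ω := by
  filter_upwards [ae_eq_zero_of_condExp_eq_zero hm hZ hZ0 hcond hY] with ω hω
  exact mul_klFun_div hω

theorem integrable_mul_klFun_div_of_condExp_eq (hm : m ≤ m0) [SigmaFinite (μ.trim hm)]
    (hZ : Integrable Z μ) (hZ0 : 0 ≤ᵐ[μ] Z) (hcond : μ[Z|m] =ᵐ[μ] Y)
    (hY : StronglyMeasurable[m] Y) (hZZ : Integrable (fun ω => Z ω * log (Z ω)) μ)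
    (hYY : Integrable (fun ω => Y ω * log (Y ω)) μ) :
    Integrable (fun ω => Y ω * klFun (Z ω / Y ω)) μ := by
  have hZlogY := integrable_mul_of_condExp_eq hm hZ hZ0 hcond
    (measurable_log.comp hY.measurable).stronglyMeasurable hYY
  exact (((hZZ.sub hZlogY).sub hZ).add (integrable_condExp.congr hcond)).congr
    (mul_klFun_div_ae_eq_of_condExp_eq hm hZ hZ0 hcond hY).symm

theorem integral_mul_klFun_div_of_condExp_eq (hm : m ≤ m0) [SigmaFinite (μ.trim hm)]
    (hZ : Integrable Z μ) (hZ0 : 0 ≤ᵐ[μ] Z) (hcond : μ[Z|m] =ᵐ[μ] Y)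
    (hY : StronglyMeasurable[m] Y) (hZZ : Integrable (fun ω => Z ω * log (Z ω)) μ)
    (hYY : Integrable (fun ω => Y ω * log (Y ω)) μ) :
    ∫ ω, Y ω * klFun (Z ω / Y ω) ∂μ
      = (∫ ω, Z ω * log (Z ω) ∂μ) - ∫ ω, Y ω * log (Y ω) ∂μ := by
  have hlog : StronglyMeasurable[m] fun ω => log (Y ω) :=
    (measurable_log.comp hY.measurable).stronglyMeasurable
  have hZlogY : Integrable (fun ω => Z ω * log (Y ω)) μ :=
    integrable_mul_of_condExp_eq hm hZ hZ0 hcond hlog hYY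
  rw [integral_congr_ae (mul_klFun_div_ae_eq_of_condExp_eq hm hZ hZ0 hcond hY),
    integral_add ?_ (integrable_condExp.congr hcond), integral_sub ?_ hZ, integral_sub hZZ hZlogY,
    integral_mul_eq_of_condExp_eq hm hZ hZ0 hcond hlog hYY,
    ← integral_congr_ae hcond, integral_condExp hm]
  · ring
  · exact hZZ.sub hZlogY
  · exact (hZZ.sub hZlogY).sub hZ

end CondExp

/-- If `Z` and `Y` are nonnegative random variables with `E(Z | Y) = Y`, then
`E|Z - Y| ≤ sqrt(2 E Z) * sqrt(E(Z log Z) - E(Y log Y))`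
(with the convention `0 log 0 = 0`, which holds since `Real.log 0 = 0`). -/
theorem stmt2 {Ω : Type} [MeasurableSpace Ω] (μ : Measure Ω) [IsProbabilityMeasure μ]
    (Z Y : Ω → ℝ) (hY : Measurable Y)
    (hZnn : ∀ ω, 0 ≤ Z ω) (hYnn : ∀ ω, 0 ≤ Y ω)
    (hZint : Integrable Z μ) (hYint : Integrable Y μ)
    (hZZ : Integrable (fun ω => Z ω * Real.log (Z ω)) μ)
    (hYY : Integrable (fun ω => Y ω * Real.log (Y ω)) μ)
    (hcond : μ[Z | MeasurableSpace.comap Y Real.measurableSpace] =ᵐ[μ] Y) :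
    ∫ ω, |Z ω - Y ω| ∂μ ≤
      Real.sqrt (2 * ∫ ω, Z ω ∂μ) *
        Real.sqrt ((∫ ω, Z ω * Real.log (Z ω) ∂μ) - ∫ ω, Y ω * Real.log (Y ω) ∂μ) := by
  have hm := hY.comap_le
  have hZ0 : 0 ≤ᵐ[μ] Z := ae_of_all _ hZnn
  have hYm : StronglyMeasurable[MeasurableSpace.comap Y Real.measurableSpace] Y :=
    (comap_measurable Y).stronglyMeasurable
  have hmean : ∫ ω, (2 * Z ω + 4 * Y ω) / 3 ∂μ = 2 * ∫ ω, Z ω ∂μ := by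
    rw [integral_div, integral_add (hZint.const_mul 2) (hYint.const_mul 4), integral_const_mul,
      integral_const_mul, ← integral_congr_ae hcond, integral_condExp hm]
    ring
  rw [← hmean, ← integral_mul_klFun_div_of_condExp_eq hm hZint hZ0 hcond hYm hZZ hYY]
  refine integral_abs_le_sqrt_mul_sqrt (((hZint.const_mul 2).add (hYint.const_mul 4)).div_const 3)
    (integrable_mul_klFun_div_of_condExp_eq hm hZint hZ0 hcond hYm hZZ hYY)
    (ae_of_all _ fun ω => div_nonneg (by linarith [hZnn ω, hYnn ω]) zero_le_three)
    (ae_of_all _ fun ω => mul_nonneg (hYnn ω) (klFun_nonneg (div_nonneg (hZnn ω) (hYnn ω)))) ?_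
  filter_upwards [ae_eq_zero_of_condExp_eq_zero hm hZint hZ0 hcond hYm] with ω hω
  linarith [three_mul_sq_sub_le_mul_mul_klFun_div (hZnn ω) (hYnn ω) hω]
end

section
/- Let p_0, p_1, ..., p_k be a martingale taking values in the probability simplex Δ(X) over a finite set X, with p_0 constant equal to p. Then E( Σ_{t=1}^k ||p_t - p_{t-1}||_1 ) ≤ sqrt(2 k H(p)), where H(p) = -Σ_x p(x) log p(x) is the Shannon entropy with natural logarithm. -/
open MeasureTheory Real

/-!
For probability vectors `q`, `r` with `supp q ⊆ supp r`, Pinsker's inequality reads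
`‖q - r‖₁² ≤ 2 KL(q ‖ r) = 2 (∑ q (-log r) - H(q))`. Take `q = p_j`, `r = p_i` with `i ≤ j`: as
`-log p_i` is `ℱ_i`-measurable, the martingale property turns `E ∑ p_j (-log p_i)` into
`E ∑ p_i (-log p_i) = E H(p_i)`, so `(E ‖p_j - p_i‖₁)² ≤ 2 (E H(p_i) - E H(p_j))`. The expected
entropies telescope along the steps, and Cauchy–Schwarz gives the bound `√(2 k H(p))`.

Pinsker's inequality itself comes from the scalar bound
`3/2 (a - b)² / (a + 2b) ≤ a log (a / b) - a + b` and Cauchy–Schwarz with weights `q + 2r`,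
whose total mass is `3`.
-/

lemma two_mul_sq_sub_one_div_le_sub_one_mul_log {t : ℝ} (ht : 0 < t) :
    2 * (t - 1) ^ 2 / (t + 1) ≤ (t - 1) * log t := by
  set y := (t - 1) / (t + 1) with hy
  have hy1 : |y| < 1 := by
    rw [abs_lt, hy, lt_div_iff₀ (by linarith), div_lt_iff₀ (by linarith)]
    constructor <;> linarith
  have hlog : log (1 + y) - log (1 - y) = log t := by
    rw [← log_div (by rw [abs_lt] at hy1; linarith) (by rw [abs_lt] at hy1; linarith)]
    congr 1
    rw [hy]; field_simp; ring
  have hsum := (hasSum_log_sub_log_of_abs_lt_one hy1).mul_left y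
  rw [hlog] at hsum
  have hfirst := le_hasSum hsum 0 fun k _ => by
    have : y * (2 * (1 / (2 * k + 1)) * y ^ (2 * k + 1))
        = 2 / (2 * k + 1) * (y ^ (k + 1)) ^ 2 := by ring
    rw [this]
    positivity
  have : 2 * y ^ 2 ≤ y * log t := by simpa [sq, mul_left_comm] using hfirst
  rw [hy] at this
  rw [div_le_iff₀ (by linarith)]
  field_simp at this
  nlinarith [this]

lemma isMinOn_of_sub_mul_hasDerivAt_nonneg {D : Set ℝ} (hD : Convex ℝ D) {F F' : ℝ → ℝ} {b : ℝ}
    (hF : ContinuousOn F D) (hF' : ∀ x ∈ interior D, HasDerivAt F (F' x) x)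
    (hsign : ∀ x ∈ interior D, 0 ≤ (x - b) * F' x) (hb : b ∈ D) : IsMinOn F D b := by
  intro a ha
  have hderiv : ∀ {u v}, u ∈ D → v ∈ D → ∀ x ∈ interior (Set.Icc u v),
      x ∈ interior D ∧ HasDerivWithinAt F (F' x) (interior (Set.Icc u v)) x := fun hu hv x hx =>
    have hxD := interior_mono (hD.ordConnected.out hu hv) hx
    ⟨hxD, (hF' x hxD).hasDerivWithinAt⟩
  rcases le_total a b with hab | hba
  · refine antitoneOn_of_hasDerivWithinAt_nonpos (convex_Icc a b)
      (hF.mono (hD.ordConnected.out ha hb)) (fun x hx => (hderiv ha hb x hx).2) (fun x hx => ?_)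
      ⟨le_rfl, hab⟩ ⟨hab, le_rfl⟩ hab
    rw [interior_Icc] at hx
    exact nonpos_of_mul_nonneg_right (hsign x (hderiv ha hb x (by rwa [interior_Icc])).1)
      (by linarith [hx.2])
  · refine monotoneOn_of_hasDerivWithinAt_nonneg (convex_Icc b a)
      (hF.mono (hD.ordConnected.out hb ha)) (fun x hx => (hderiv hb ha x hx).2) (fun x hx => ?_)
      ⟨le_rfl, hba⟩ ⟨hba, le_rfl⟩ hba
    rw [interior_Icc] at hx
    exact nonneg_of_mul_nonneg_right (hsign x (hderiv hb ha x (by rwa [interior_Icc])).1)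
      (by linarith [hx.1])

lemma three_div_two_mul_sq_div_le_mul_log_sub {a b : ℝ} (ha : 0 ≤ a) (hb : 0 < b) :
    3 / 2 * (a - b) ^ 2 / (a + 2 * b) ≤ a * log a - a * log b - a + b := by
  let F x := x * log x - x * log b - x + b - 3 / 2 * (x - b) ^ 2 / (x + 2 * b)
  let F' x := log x - log b - 3 / 2 * ((x - b) * (x + 5 * b)) / (x + 2 * b) ^ 2
  have hcont : ContinuousOn F (Set.Ici 0) := by
    refine (((continuous_mul_log.sub (by fun_prop)).sub continuous_id).add
      continuous_const).continuousOn.sub (ContinuousOn.div (by fun_prop) (by fun_prop) ?_)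
    exact fun x (hx : 0 ≤ x) => by positivity
  have hderiv : ∀ x ∈ interior (Set.Ici 0), HasDerivAt F (F' x) x := by
    rw [interior_Ici]
    intro x (hx : 0 < x)
    have := ((((hasDerivAt_mul_log hx.ne').sub ((hasDerivAt_id x).mul_const (log b))).sub
      (hasDerivAt_id x)).add_const b).sub
      ((((hasDerivAt_id x).sub_const b).pow 2).const_mul (3 / 2 : ℝ) |>.div
        ((hasDerivAt_id x).add_const (2 * b)) (by positivity))
    refine this.congr_deriv ?_
    simp only [F', id, Pi.pow_apply]
    field_simp
    ring
  have hsign : ∀ x ∈ interior (Set.Ici 0), 0 ≤ (x - b) * F' x := by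
    rw [interior_Ici]
    intro x (hx : 0 < x)
    have hlog : 2 * (x - b) ^ 2 / (x + b) ≤ (x - b) * (log x - log b) := by
      have h := two_mul_sq_sub_one_div_le_sub_one_mul_log (div_pos hx hb)
      rw [log_div hx.ne' hb.ne'] at h
      have e1 : 2 * (x / b - 1) ^ 2 / (x / b + 1) = 2 * (x - b) ^ 2 / (x + b) / b := by
        field_simp
      have e2 : (x / b - 1) * (log x - log b) = (x - b) * (log x - log b) / b := by
        field_simp
      rwa [e1, e2, div_le_div_iff_of_pos_right hb] at h
    -- after `hlog`, this is `4 (x + 2b)² - 3 (x + b) (x + 5b) = (x - b)² ≥ 0`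
    have hrat : (x - b) * (3 / 2 * ((x - b) * (x + 5 * b)) / (x + 2 * b) ^ 2)
        ≤ 2 * (x - b) ^ 2 / (x + b) := by
      rw [mul_div_assoc', div_le_div_iff₀ (by positivity) (by positivity)]
      nlinarith [pow_two_nonneg ((x - b) ^ 2), mul_pos hx hb]
    simp only [F']
    nlinarith [hlog, hrat]
  have : F b ≤ F a :=
    isMinOn_of_sub_mul_hasDerivAt_nonneg (convex_Ici 0) hcont hderiv hsign hb.le ha
  simp only [F] at this
  norm_num at this
  linarith

theorem sq_sum_abs_sub_le_two_mul_sum_mul_log_sub {X : Type*} [Fintype X] {q r : X → ℝ}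
    (hq : q ∈ stdSimplex ℝ X) (hr : r ∈ stdSimplex ℝ X) (hqr : ∀ x, r x = 0 → q x = 0) :
    (∑ x, |q x - r x|) ^ 2 ≤ 2 * ∑ x, (q x * log (q x) - q x * log (r x)) := by
  obtain ⟨hq, hq1⟩ := hq
  obtain ⟨hr, hr1⟩ := hr
  set S := ∑ x, (q x - r x) ^ 2 / (q x + 2 * r x)
  have hterm x : 3 / 2 * ((q x - r x) ^ 2 / (q x + 2 * r x))
      ≤ q x * log (q x) - q x * log (r x) - q x + r x := by
    rcases (hr x).eq_or_lt with hrx | hrx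
    · simp [← hrx, hqr x hrx.symm]
    · rw [← mul_div_assoc]
      exact three_div_two_mul_sq_div_le_mul_log_sub (hq x) hrx
  have hS : 3 / 2 * S ≤ ∑ x, (q x * log (q x) - q x * log (r x)) := by
    have := Finset.sum_le_sum fun x (_ : x ∈ Finset.univ) => hterm x
    simp only [Finset.sum_add_distrib, Finset.sum_sub_distrib, ← Finset.mul_sum, hq1, hr1] at this
    rw [Finset.sum_sub_distrib]
    linarith
  have hCS : (∑ x, |q x - r x|) ^ 2 ≤ S * ∑ x, (q x + 2 * r x) :=
    Finset.sum_sq_le_sum_mul_sum_of_sq_le_mul _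
      (fun x _ => div_nonneg (sq_nonneg _) (by linarith [hq x, hr x]))
      (fun x _ => by linarith [hq x, hr x])
      (fun x _ => by
        rw [sq_abs, div_mul_cancel_of_imp fun h => by nlinarith [hq x, hr x]])
  rw [Finset.sum_add_distrib, ← Finset.mul_sum, hq1, hr1] at hCS
  linarith

namespace MeasureTheory.Martingale

variable {Ω ι : Type*} [Preorder ι] {m0 : MeasurableSpace Ω} {μ : Measure Ω}
  {ℱ : Filtration ι m0} [SigmaFiniteFiltration μ ℱ] {f : ι → Ω → ℝ} {i j : ι}

/-- Lebesgue integrals, so that `g` need not be integrable (below it is the unbounded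
`-log (f i)`). -/
theorem lintegral_ofReal_mul_eq (hf : Martingale f ℱ μ) (hnn : ∀ n, 0 ≤ᵐ[μ] f n) (hij : i ≤ j)
    {g : Ω → ℝ} (hg : Measurable[ℱ i] g) :
    ∫⁻ ω, ENNReal.ofReal (f j ω * g ω) ∂μ = ∫⁻ ω, ENNReal.ofReal (f i ω * g ω) ∂μ := by
  have hmeas n : Measurable (fun ω => ENNReal.ofReal (f n ω)) :=
    ((hf.stronglyMeasurable n).mono (ℱ.le n)).measurable.ennreal_ofReal
  have hdens n : ∫⁻ ω, ENNReal.ofReal (f n ω * g ω) ∂μ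
      = ∫⁻ ω, ENNReal.ofReal (g ω)
          ∂(μ.withDensity fun ω => ENNReal.ofReal (f n ω)).trim (ℱ.le i) := by
    rw [lintegral_trim _ hg.ennreal_ofReal,
      lintegral_withDensity_eq_lintegral_mul _ (hmeas n) (hg.mono (ℱ.le i) le_rfl).ennreal_ofReal]
    refine lintegral_congr_ae ?_
    filter_upwards [hnn n] with ω hω
    exact ENNReal.ofReal_mul hω
  -- this is the martingale property `∫ in s, f i = ∫ in s, f j` for `s ∈ ℱ i`
  have htrim : (μ.withDensity fun ω => ENNReal.ofReal (f j ω)).trim (ℱ.le i)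
      = (μ.withDensity fun ω => ENNReal.ofReal (f i ω)).trim (ℱ.le i) := by
    refine @Measure.ext _ (ℱ i) _ _ fun s hs => ?_
    rw [trim_measurableSet_eq _ hs, trim_measurableSet_eq _ hs,
      withDensity_apply _ (ℱ.le i s hs), withDensity_apply _ (ℱ.le i s hs),
      ← ofReal_integral_eq_lintegral_ofReal (hf.integrable j).restrict
        (ae_restrict_of_ae (hnn j)),
      ← ofReal_integral_eq_lintegral_ofReal (hf.integrable i).restrict
        (ae_restrict_of_ae (hnn i)),
      hf.setIntegral_eq hij hs]
  rw [hdens, hdens, htrim]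

variable {g : Ω → ℝ}

theorem integral_mul_eq (hf : Martingale f ℱ μ) (hnn : ∀ n, 0 ≤ᵐ[μ] f n) (hij : i ≤ j)
    (hg : Measurable[ℱ i] g) (hg0 : 0 ≤ g) : ∫ ω, f j ω * g ω ∂μ = ∫ ω, f i ω * g ω ∂μ := by
  have hm n : AEStronglyMeasurable (fun ω => f n ω * g ω) μ :=
    ((hf.stronglyMeasurable n).mono (ℱ.le n)).aestronglyMeasurable.mul
      (hg.mono (ℱ.le i) le_rfl).aestronglyMeasurable
  have h0 n : 0 ≤ᵐ[μ] fun ω => f n ω * g ω := by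
    filter_upwards [hnn n] with ω hω using mul_nonneg hω (hg0 ω)
  rw [integral_eq_lintegral_of_nonneg_ae (h0 j) (hm j),
    integral_eq_lintegral_of_nonneg_ae (h0 i) (hm i), lintegral_ofReal_mul_eq hf hnn hij hg]

theorem integrable_mul (hf : Martingale f ℱ μ) (hnn : ∀ n, 0 ≤ᵐ[μ] f n) (hij : i ≤ j)
    (hg : Measurable[ℱ i] g) (hg0 : 0 ≤ g) (hint : Integrable (fun ω => f i ω * g ω) μ) :
    Integrable (fun ω => f j ω * g ω) μ := by
  have h0 n : 0 ≤ᵐ[μ] fun ω => f n ω * g ω := by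
    filter_upwards [hnn n] with ω hω using mul_nonneg hω (hg0 ω)
  refine ⟨((hf.stronglyMeasurable j).mono (ℱ.le j)).aestronglyMeasurable.mul
      (hg.mono (ℱ.le i) le_rfl).aestronglyMeasurable, ?_⟩
  rw [hasFiniteIntegral_iff_ofReal (h0 j), lintegral_ofReal_mul_eq hf hnn hij hg]
  exact (hasFiniteIntegral_iff_ofReal (h0 i)).1 hint.2

theorem ae_eq_zero_of_eq_zero (hf : Martingale f ℱ μ) (hnn : ∀ n, 0 ≤ᵐ[μ] f n) (hij : i ≤ j) :
    ∀ᵐ ω ∂μ, f i ω = 0 → f j ω = 0 := by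
  set A := {ω | f i ω = 0}
  have hA : MeasurableSet[ℱ i] A := (hf.stronglyMeasurable i).measurable (measurableSet_singleton 0)
  have hg : Measurable[ℱ i] (A.indicator (1 : Ω → ℝ)) := measurable_const.indicator hA
  have hzero : ∫⁻ ω, ENNReal.ofReal (f j ω * A.indicator 1 ω) ∂μ = 0 := by
    rw [lintegral_ofReal_mul_eq hf hnn hij hg]
    refine (lintegral_congr fun ω => ?_).trans lintegral_zero
    by_cases h : ω ∈ A <;> simp_all [A]
  have hmeas : Measurable fun ω => ENNReal.ofReal (f j ω * A.indicator 1 ω) :=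
    (((hf.stronglyMeasurable j).mono (ℱ.le j)).measurable.mul
      (hg.mono (ℱ.le i) le_rfl)).ennreal_ofReal
  filter_upwards [(lintegral_eq_zero_iff hmeas).1 hzero, hnn j] with ω hω hj hωA
  rw [Pi.zero_apply, Set.indicator_of_mem (show ω ∈ A from hωA), Pi.one_apply, mul_one,
    ENNReal.ofReal_eq_zero] at hω
  exact le_antisymm hω hj

end MeasureTheory.Martingale

section Entropy

variable {X : Type*} [Fintype X]

noncomputable def shannonEntropy (q : X → ℝ) : ℝ := ∑ x, negMulLog (q x)

theorem continuous_shannonEntropy : Continuous (shannonEntropy : (X → ℝ) → ℝ) := by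
  unfold shannonEntropy
  fun_prop

theorem shannonEntropy_nonneg {q : X → ℝ} (hq : q ∈ stdSimplex ℝ X) : 0 ≤ shannonEntropy q :=
  Finset.sum_nonneg fun x _ =>
    negMulLog_nonneg (hq.1 x) (mem_Icc_of_mem_stdSimplex hq x).2

theorem shannonEntropy_le_card {q : X → ℝ} (hq : ∀ x, 0 ≤ q x) :
    shannonEntropy q ≤ Fintype.card X := by
  rw [← nsmul_one, ← Finset.card_univ]
  exact Finset.sum_le_card_nsmul _ _ _ fun x _ =>
    (negMulLog_le_one_sub_self (hq x)).trans (by linarith [hq x])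

theorem integrable_shannonEntropy_comp {Ω : Type*} {m0 : MeasurableSpace Ω}
    {μ : Measure Ω} [IsFiniteMeasure μ] {p : Ω → X → ℝ} (hp : ∀ x, Measurable fun ω => p ω x)
    (hp1 : ∀ ω, p ω ∈ stdSimplex ℝ X) : Integrable (fun ω => shannonEntropy (p ω)) μ := by
  refine .of_bound (continuous_shannonEntropy.measurable.comp
    (measurable_pi_lambda _ hp)).aestronglyMeasurable (Fintype.card X) (ae_of_all _ fun ω => ?_)
  rw [norm_eq_abs, abs_of_nonneg (shannonEntropy_nonneg (hp1 ω))]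
  exact shannonEntropy_le_card (hp1 ω).1

end Entropy

section MartingaleVariation

variable {Ω ι X : Type*} [Preorder ι] [Fintype X] {m0 : MeasurableSpace Ω} {μ : Measure Ω}
  [IsProbabilityMeasure μ] {ℱ : Filtration ι m0} {f : ι → Ω → X → ℝ}

theorem sq_integral_sum_abs_sub_le_two_mul_sub
    (hmart : ∀ x, Martingale (fun n ω => f n ω x) ℱ μ) (hf : ∀ n ω, f n ω ∈ stdSimplex ℝ X)
    {i j : ι} (hij : i ≤ j) :
    (∫ ω, ∑ x, |f j ω x - f i ω x| ∂μ) ^ 2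
      ≤ 2 * (∫ ω, shannonEntropy (f i ω) ∂μ - ∫ ω, shannonEntropy (f j ω) ∂μ) := by
  have hmeas n x : Measurable fun ω => f n ω x :=
    ((hmart x).stronglyMeasurable n).mono (ℱ.le n) |>.measurable
  have hnn n x : 0 ≤ᵐ[μ] fun ω => f n ω x := ae_of_all _ fun ω => (hf n ω).1 x
  have hle n ω x : f n ω x ≤ 1 := (mem_Icc_of_mem_stdSimplex (hf n ω) x).2
  set D := fun ω => ∑ x, |f j ω x - f i ω x|
  set C := fun ω => ∑ x, f j ω x * -log (f i ω x)
  have hlog x : Measurable[ℱ i] fun ω => -log (f i ω x) :=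
    ((hmart x).stronglyMeasurable i).measurable.log.neg
  have hlog0 x : 0 ≤ fun ω => -log (f i ω x) := fun ω =>
    neg_nonneg.2 (log_nonpos ((hf i ω).1 x) (hle i ω x))
  have hnegMulLog ω x : f i ω x * -log (f i ω x) = negMulLog (f i ω x) := by
    rw [negMulLog]; ring
  have hHint x : Integrable (fun ω => negMulLog (f i ω x)) μ := by
    refine .of_bound (continuous_negMulLog.measurable.comp (hmeas i x)).aestronglyMeasurable 1
      (ae_of_all _ fun ω => ?_)
    rw [norm_eq_abs, abs_of_nonneg (negMulLog_nonneg ((hf i ω).1 x) (hle i ω x))]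
    linarith [negMulLog_le_one_sub_self ((hf i ω).1 x), (hf i ω).1 x]
  have hCint x : Integrable (fun ω => f j ω x * -log (f i ω x)) μ :=
    (hmart x).integrable_mul (hnn · x) hij (hlog x) (hlog0 x)
      (by simpa only [hnegMulLog] using hHint x)
  have hCeq : ∫ ω, C ω ∂μ = ∫ ω, shannonEntropy (f i ω) ∂μ := by
    simp only [C, shannonEntropy]
    rw [integral_finsetSum _ fun x _ => hCint x, integral_finsetSum _ fun x _ => hHint x]
    refine Finset.sum_congr rfl fun x _ => ?_
    rw [(hmart x).integral_mul_eq (hnn · x) hij (hlog x) (hlog0 x)]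
    simp only [hnegMulLog]
  have hpinsker : ∀ᵐ ω ∂μ, D ω ^ 2 ≤ 2 * (C ω - shannonEntropy (f j ω)) := by
    filter_upwards [ae_all_iff.2 fun x => (hmart x).ae_eq_zero_of_eq_zero (hnn · x) hij] with ω hω
    have hKL : ∑ x, (f j ω x * log (f j ω x) - f j ω x * log (f i ω x))
        = C ω - shannonEntropy (f j ω) := by
      simp only [C, shannonEntropy, ← Finset.sum_sub_distrib, negMulLog]
      exact Finset.sum_congr rfl fun x _ => by ring
    rw [← hKL]
    exact sq_sum_abs_sub_le_two_mul_sum_mul_log_sub (hf j ω) (hf i ω) hω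
  have hD : MemLp D 2 μ := by
    refine .of_bound (by fun_prop) (Fintype.card X) (ae_of_all _ fun ω => ?_)
    rw [norm_eq_abs, abs_of_nonneg (Finset.sum_nonneg fun x _ => abs_nonneg _), ← nsmul_one,
      ← Finset.card_univ]
    refine Finset.sum_le_card_nsmul _ _ _ fun x _ => abs_sub_le_iff.2 ⟨?_, ?_⟩ <;>
      linarith [hle i ω x, hle j ω x, (hf i ω).1 x, (hf j ω).1 x]
  have hjensen : (∫ ω, D ω ∂μ) ^ 2 ≤ ∫ ω, D ω ^ 2 ∂μ := by
    have := ProbabilityTheory.variance_eq_sub hD ▸ ProbabilityTheory.variance_nonneg D μ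
    simpa using this
  have hC : Integrable C μ := integrable_finsetSum _ fun x _ => hCint x
  have hHj := integrable_shannonEntropy_comp (μ := μ) (hmeas j) (hf j)
  calc (∫ ω, D ω ∂μ) ^ 2 ≤ ∫ ω, D ω ^ 2 ∂μ := hjensen
    _ ≤ ∫ ω, 2 * (C ω - shannonEntropy (f j ω)) ∂μ :=
      integral_mono_ae hD.integrable_sq ((hC.sub hHj).const_mul 2) hpinsker
    _ = _ := by rw [integral_const_mul, integral_sub hC hHj, hCeq]

end MartingaleVariation

theorem sum_range_le_sqrt_of_sq_le_sub {a c : ℕ → ℝ} (h : ∀ i, a i ^ 2 ≤ c i - c (i + 1))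
    (k : ℕ) :
    ∑ i ∈ Finset.range k, a i ≤ √(k * (c 0 - c k)) := by
  refine (le_abs_self _).trans (abs_le_sqrt ?_)
  calc (∑ i ∈ Finset.range k, a i) ^ 2 ≤ k * ∑ i ∈ Finset.range k, a i ^ 2 := by
        simpa using sq_sum_le_card_mul_sum_sq (s := Finset.range k) (f := a)
    _ ≤ k * ∑ i ∈ Finset.range k, (c i - c (i + 1)) := by gcongr with i; exact h i
    _ = k * (c 0 - c k) := by rw [Finset.sum_range_sub']

/-- The variation of a `k`-step martingale of probability vectors on a finite set `X`,
starting at the constant `p`, is at most `sqrt (2 k H(p))`, where `H` is the Shannon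
entropy with natural logarithm (`0 log 0 = 0` via `Real.negMulLog`). -/
theorem stmt6 {Ω : Type} {m : MeasurableSpace Ω} (μ : Measure Ω) [IsProbabilityMeasure μ]
    (ℱ : Filtration ℕ m) (k : ℕ) {X : Type} [Fintype X] (p : X → ℝ)
    (f : ℕ → Ω → X → ℝ)
    (hnn : ∀ t ω x, 0 ≤ f t ω x) (hsum : ∀ t ω, ∑ x, f t ω x = 1)
    (h0 : ∀ ω, f 0 ω = p)
    (hmart : ∀ x, Martingale (fun t ω => f t ω x) ℱ μ) :
    ∑ t ∈ Finset.Icc 1 k, ∫ ω, ∑ x, |f t ω x - f (t - 1) ω x| ∂μ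
      ≤ Real.sqrt (2 * k * ∑ x, Real.negMulLog (p x)) := by
  have hf t ω : f t ω ∈ stdSimplex ℝ X := ⟨hnn t ω, hsum t ω⟩
  set H := fun t => ∫ ω, shannonEntropy (f t ω) ∂μ
  have hreindex (g : ℕ → ℕ → ℝ) (n : ℕ) :
      ∑ t ∈ Finset.Icc 1 n, g t (t - 1) = ∑ i ∈ Finset.range n, g (i + 1) i := by
    induction n with
    | zero => simp
    | succ n ih => rw [Finset.sum_Icc_succ_top (by omega), ih, Finset.sum_range_succ]; rfl
  have hH0 : H 0 = ∑ x, negMulLog (p x) := by simp [H, h0, shannonEntropy]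
  have hHk : 0 ≤ H k := integral_nonneg fun ω => shannonEntropy_nonneg (hf k ω)
  rw [hreindex (fun t s => ∫ ω, ∑ x, |f t ω x - f s ω x| ∂μ)]
  calc _ ≤ √(k * (2 * H 0 - 2 * H k)) := sum_range_le_sqrt_of_sq_le_sub (c := (2 * H ·))
        (fun i => by linarith [sq_integral_sum_abs_sub_le_two_mul_sub hmart hf (Nat.le_succ i)]) k
    _ ≤ _ := Real.sqrt_le_sqrt (by rw [← hH0]; nlinarith [Nat.cast_nonneg (α := ℝ) k])
end

section
/- Let p_0, ..., p_k be a martingale of probability vectors on a finite set X with p_0 = p constant. Then E(Σ_{t=1}^k ||p_t - p_{t-1}||_1) ≤ Σ_{x∈X} sqrt(k · p(x)(1 - p(x))), and hence ≤ sqrt(k(d-1)) where d = |X|. -/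
/-! Coordinatewise, martingale increments are orthogonal in `L²`, so the expected squared
increments of `p_t(x)` sum to `Var p_k(x)`, which is at most `p(x)(1 - p(x))` because `p_k(x)` is
`[0, 1]`-valued with mean `p(x)`. Jensen (`E|Y| ≤ √(E Y²)`) and Cauchy–Schwarz over the `k` steps
turn this into the bound `√(k p(x)(1 - p(x)))` on the expected variation of `p_t(x)`. A second
Cauchy–Schwarz, over `X`, together with `Σ_x p(x)² ≥ 1/d` gives `√(k (d - 1))`. -/

open MeasureTheory ProbabilityTheory Finset

lemma Real.sum_sqrt_le_sqrt_card_mul_sum {ι : Type*} (s : Finset ι) {a : ι → ℝ}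
    (ha : ∀ i ∈ s, 0 ≤ a i) : ∑ i ∈ s, √(a i) ≤ √(#s * ∑ i ∈ s, a i) := by
  have h := Real.sum_mul_le_sqrt_mul_sqrt s (fun _ => 1) (fun i => √(a i))
  simp only [one_mul, one_pow, sum_const, nsmul_eq_mul, mul_one] at h
  rwa [sum_congr rfl fun i hi => Real.sq_sqrt (ha i hi), ← Real.sqrt_mul (Nat.cast_nonneg _)] at h

lemma card_mul_sum_mul_one_sub_le {X : Type*} [Fintype X] {p : X → ℝ} (hp : ∑ x, p x = 1) :
    Fintype.card X * ∑ x, p x * (1 - p x) ≤ Fintype.card X - 1 := by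
  have hcs := sq_sum_le_card_mul_sum_sq (s := univ) (f := p)
  rw [hp, card_univ] at hcs
  have hsum : ∑ x, p x * (1 - p x) = 1 - ∑ x, p x ^ 2 := by
    simp only [mul_one_sub, sum_sub_distrib, hp, sq]
  rw [hsum]
  linarith

lemma integral_abs_le_sqrt_integral_sq {Ω : Type*} {m : MeasurableSpace Ω} {μ : Measure Ω}
    [IsProbabilityMeasure μ] {f : Ω → ℝ} (hf : MemLp f 2 μ) :
    ∫ ω, |f ω| ∂μ ≤ √(∫ ω, f ω ^ 2 ∂μ) := by
  refine Real.le_sqrt_of_sq_le ?_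
  have h := variance_nonneg |f| μ
  rw [variance_eq_sub hf.abs] at h
  simpa [sq_abs] using h

namespace MeasureTheory.Martingale

variable {Ω : Type*} {m : MeasurableSpace Ω} {μ : Measure Ω}

lemma integral_mul_eq_integral_sq [IsFiniteMeasure μ] {ι : Type*} [Preorder ι]
    {ℱ : Filtration ι m} {g : ι → Ω → ℝ} (hg : Martingale g ℱ μ) {i j : ι}
    (hi : MemLp (g i) 2 μ) (hj : MemLp (g j) 2 μ) (hij : i ≤ j) :
    ∫ ω, g i ω * g j ω ∂μ = ∫ ω, g i ω ^ 2 ∂μ := by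
  have hpull : μ[g i * g j|ℱ i] =ᵐ[μ] g i * g i := by
    filter_upwards [condExp_mul_of_stronglyMeasurable_left (hg.stronglyAdapted i)
      (hi.integrable_mul hj) (hg.integrable j), hg.condExp_ae_eq hij] with ω hmul hcond
    rw [hmul, Pi.mul_apply, hcond, Pi.mul_apply]
  calc ∫ ω, g i ω * g j ω ∂μ = ∫ ω, μ[g i * g j|ℱ i] ω ∂μ :=
        (integral_condExp (ℱ.le i)).symm
    _ = ∫ ω, g i ω ^ 2 ∂μ := by simp only [integral_congr_ae hpull, Pi.mul_apply, sq]

lemma integral_sub_sq [IsFiniteMeasure μ] {ι : Type*} [Preorder ι]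
    {ℱ : Filtration ι m} {g : ι → Ω → ℝ} (hg : Martingale g ℱ μ) {i j : ι}
    (hi : MemLp (g i) 2 μ) (hj : MemLp (g j) 2 μ) (hij : i ≤ j) :
    ∫ ω, (g j ω - g i ω) ^ 2 ∂μ = ∫ ω, g j ω ^ 2 ∂μ - ∫ ω, g i ω ^ 2 ∂μ := by
  have hexpand : ∀ ω, (g j ω - g i ω) ^ 2 = g j ω ^ 2 - 2 * (g i ω * g j ω) + g i ω ^ 2 :=
    fun ω => by ring
  have hcross : Integrable (fun ω => 2 * (g i ω * g j ω)) μ :=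
    (hi.integrable_mul hj).const_mul 2
  have hdiff : Integrable (fun ω => g j ω ^ 2 - 2 * (g i ω * g j ω)) μ :=
    hj.integrable_sq.sub hcross
  simp only [hexpand]
  rw [integral_add hdiff hi.integrable_sq,
    integral_sub hj.integrable_sq hcross, integral_const_mul,
    hg.integral_mul_eq_integral_sq hi hj hij]
  ring

variable {ℱ : Filtration ℕ m} {g : ℕ → Ω → ℝ}

lemma sum_integral_sub_pred_sq [IsFiniteMeasure μ] (hg : Martingale g ℱ μ)
    (hL2 : ∀ t, MemLp (g t) 2 μ) (k : ℕ) :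
    ∑ t ∈ Icc 1 k, ∫ ω, (g t ω - g (t - 1) ω) ^ 2 ∂μ
      = ∫ ω, g k ω ^ 2 ∂μ - ∫ ω, g 0 ω ^ 2 ∂μ := by
  induction k with
  | zero => simp
  | succ k ih =>
    rw [sum_Icc_succ_top (by omega), ih, Nat.add_sub_cancel,
      hg.integral_sub_sq (hL2 k) (hL2 (k + 1)) k.le_succ]
    ring

lemma sum_integral_abs_sub_pred_le [IsProbabilityMeasure μ] (hg : Martingale g ℱ μ)
    (hL2 : ∀ t, MemLp (g t) 2 μ) (k : ℕ) :
    ∑ t ∈ Icc 1 k, ∫ ω, |g t ω - g (t - 1) ω| ∂μ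
      ≤ √(k * (∫ ω, g k ω ^ 2 ∂μ - ∫ ω, g 0 ω ^ 2 ∂μ)) :=
  calc ∑ t ∈ Icc 1 k, ∫ ω, |g t ω - g (t - 1) ω| ∂μ
      ≤ ∑ t ∈ Icc 1 k, √(∫ ω, (g t ω - g (t - 1) ω) ^ 2 ∂μ) :=
        sum_le_sum fun t _ => integral_abs_le_sqrt_integral_sq ((hL2 t).sub (hL2 (t - 1)))
    _ ≤ √(#(Icc 1 k) * ∑ t ∈ Icc 1 k, ∫ ω, (g t ω - g (t - 1) ω) ^ 2 ∂μ) :=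
        Real.sum_sqrt_le_sqrt_card_mul_sum _ fun _ _ => integral_nonneg fun _ => sq_nonneg _
    _ = √(k * (∫ ω, g k ω ^ 2 ∂μ - ∫ ω, g 0 ω ^ 2 ∂μ)) := by
        rw [Nat.card_Icc, Nat.add_sub_cancel, hg.sum_integral_sub_pred_sq hL2]

lemma sum_integral_abs_sub_pred_le_of_mem_Icc [IsProbabilityMeasure μ] (hg : Martingale g ℱ μ)
    (hg01 : ∀ t ω, g t ω ∈ Set.Icc 0 1) {p : ℝ} (h0 : ∀ ω, g 0 ω = p) (k : ℕ) :
    ∑ t ∈ Icc 1 k, ∫ ω, |g t ω - g (t - 1) ω| ∂μ ≤ √(k * (p * (1 - p))) := by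
  have hL2 : ∀ t, MemLp (g t) 2 μ := fun t =>
    memLp_of_bounded (ae_of_all _ (hg01 t)) (hg.integrable t).aestronglyMeasurable 2
  have hmean : ∫ ω, g k ω ∂μ = p := by
    simpa [h0] using (hg.setIntegral_eq k.zero_le MeasurableSet.univ).symm
  have hvar : ∫ ω, g k ω ^ 2 ∂μ - ∫ ω, g 0 ω ^ 2 ∂μ = Var[g k; μ] := by
    simp [variance_eq_sub (hL2 k), hmean, h0]
  have hvar_le : Var[g k; μ] ≤ p * (1 - p) := by
    have h := variance_le_sub_mul_sub (ae_of_all μ (hg01 k)) (hg.integrable k).aemeasurable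
    rw [hmean] at h
    linarith
  refine (hg.sum_integral_abs_sub_pred_le hL2 k).trans (Real.sqrt_le_sqrt ?_)
  rw [hvar]
  exact mul_le_mul_of_nonneg_left hvar_le k.cast_nonneg

end MeasureTheory.Martingale

/-- Classical (Mertens–Zamir) bound: the variation of a `k`-step martingale of
probability vectors on a finite set `X` with `d` elements, starting at the constant `p`,
is at most `Σ_x sqrt (k p(x)(1 - p(x)))`, and hence at most `sqrt (k (d - 1))`. -/
theorem stmt10 {Ω : Type} {m : MeasurableSpace Ω} (μ : Measure Ω) [IsProbabilityMeasure μ]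
    (ℱ : Filtration ℕ m) (k : ℕ) {X : Type} [Fintype X] (p : X → ℝ)
    (f : ℕ → Ω → X → ℝ)
    (hnn : ∀ t ω x, 0 ≤ f t ω x) (hsum : ∀ t ω, ∑ x, f t ω x = 1)
    (h0 : ∀ ω, f 0 ω = p)
    (hmart : ∀ x, Martingale (fun t ω => f t ω x) ℱ μ) :
    (∑ t ∈ Finset.Icc 1 k, ∫ ω, ∑ x, |f t ω x - f (t - 1) ω x| ∂μ
        ≤ ∑ x, Real.sqrt (k * (p x * (1 - p x))))
      ∧ ∑ t ∈ Finset.Icc 1 k, ∫ ω, ∑ x, |f t ω x - f (t - 1) ω x| ∂μ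
        ≤ Real.sqrt (k * (Fintype.card X - 1)) := by
  obtain ⟨ω₀⟩ := nonempty_of_isProbabilityMeasure μ
  have hf01 : ∀ t ω x, f t ω x ∈ Set.Icc 0 1 := fun t ω x =>
    ⟨hnn t ω x, hsum t ω ▸ single_le_sum (fun y _ => hnn t ω y) (mem_univ x)⟩
  have hp01 : ∀ x, p x ∈ Set.Icc 0 1 := fun x => h0 ω₀ ▸ hf01 0 ω₀ x
  have hswap : ∑ t ∈ Icc 1 k, ∫ ω, ∑ x, |f t ω x - f (t - 1) ω x| ∂μ
      = ∑ x, ∑ t ∈ Icc 1 k, ∫ ω, |f t ω x - f (t - 1) ω x| ∂μ := by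
    rw [sum_comm]
    exact sum_congr rfl fun t _ => integral_finsetSum _ fun x _ =>
      (((hmart x).integrable t).sub ((hmart x).integrable (t - 1))).abs
  have hcoord : ∑ t ∈ Icc 1 k, ∫ ω, ∑ x, |f t ω x - f (t - 1) ω x| ∂μ
      ≤ ∑ x, √(k * (p x * (1 - p x))) :=
    hswap ▸ sum_le_sum fun x _ => (hmart x).sum_integral_abs_sub_pred_le_of_mem_Icc
      (fun t ω => hf01 t ω x) (fun ω => congrFun (h0 ω) x) k
  refine ⟨hcoord, hcoord.trans ?_⟩
  calc ∑ x, √(k * (p x * (1 - p x)))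
      ≤ √(#(univ : Finset X) * ∑ x, k * (p x * (1 - p x))) :=
        Real.sum_sqrt_le_sqrt_card_mul_sum _ fun x _ =>
          mul_nonneg k.cast_nonneg (mul_nonneg (hp01 x).1 (sub_nonneg.2 (hp01 x).2))
    _ = √(k * (Fintype.card X * ∑ x, p x * (1 - p x))) := by
        rw [card_univ, ← mul_sum]
        ring_nf
    _ ≤ √(k * (Fintype.card X - 1)) :=
        Real.sqrt_le_sqrt (mul_le_mul_of_nonneg_left
          (card_mul_sum_mul_one_sub_le (h0 ω₀ ▸ hsum 0 ω₀)) k.cast_nonneg)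
end

section
/- Let V(k, p) denote the supremum of E(Σ_{t=1}^k ||p_t - p_{t-1}||_1) over all k-step martingales of probability vectors on X starting at p_0 = p. Then for any p ∈ Δ(X_1), q ∈ Δ(X_2), and positive integers k_1, k_2: V(k_1, p) + V(k_2, q) ≤ V(k_1 + k_2, p ⊗ q), where p ⊗ q is the product distribution on X_1 × X_2. -/
/-!
Run a martingale `f` of probability vectors from `p` for `k₁` steps on `Ω₁`, freeze it, and then
run a martingale `g` from `q` for `k₂` steps on `Ω₂`. The process `f_{min(t,k₁)} ⊗ g_{t-k₁}` on
`Ω₁ × Ω₂` (with the product measure) is again a martingale of probability vectors, starting at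
`p ⊗ q`: conditional expectations of `F(ω₁) G(ω₂)` given a product σ-algebra factor, as one checks
on rectangles. While one factor is frozen at a probability vector `b`,
`‖a ⊗ b - a' ⊗ b‖₁ = ‖a - a'‖₁`, so the expected variations of the two phases add up exactly, and
passing to suprema gives the inequality.
-/

open MeasureTheory Real

/-- `V k X p` is the supremum of the expected total `ℓ₁` variation
`E (Σ_{t=1}^k ‖p_t - p_{t-1}‖₁)` over all `k`-step martingales of probability vectors
on the finite set `X` starting at the constant `p`. -/
noncomputable def V (k : ℕ) (X : Type) [Fintype X] (p : X → ℝ) : ℝ :=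
  sSup { v | ∃ (Ω : Type) (m : MeasurableSpace Ω) (μ : Measure Ω)
    (_ : IsProbabilityMeasure μ) (ℱ : Filtration ℕ m) (f : ℕ → Ω → X → ℝ),
    (∀ t ω x, 0 ≤ f t ω x) ∧ (∀ t ω, ∑ x, f t ω x = 1) ∧ (∀ ω, f 0 ω = p) ∧
    (∀ x, Martingale (fun t ω => f t ω x) ℱ μ) ∧
    v = ∑ t ∈ Finset.Icc 1 k, ∫ ω, ∑ x, |f t ω x - f (t - 1) ω x| ∂μ }

/-- `Vd k d` is the supremum of `V k X p` over all finite sets `X` with `d` elements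
and all probability vectors `p` on `X`. -/
noncomputable def Vd (k d : ℕ) : ℝ :=
  sSup { v | ∃ (X : Type) (_ : Fintype X), Fintype.card X = d ∧
    ∃ p : X → ℝ, (∀ x, 0 ≤ p x) ∧ (∑ x, p x = 1) ∧ v = V k X p }

open Finset

namespace MeasureTheory

variable {α E : Type*} [NormedAddCommGroup E] [NormedSpace ℝ E]

theorem setIntegral_eq_of_isPiSystem {m m0 : MeasurableSpace α} {μ : Measure α}
    {s : Set (Set α)} (hm : m ≤ m0) (h_eq : m = MeasurableSpace.generateFrom s)
    (h_inter : IsPiSystem s) (h_univ : Set.univ ∈ s) {f g : α → E}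
    (hf : Integrable f μ) (hg : Integrable g μ)
    (basic : ∀ t ∈ s, ∫ x in t, f x ∂μ = ∫ x in t, g x ∂μ)
    {t : Set α} (ht : MeasurableSet[m] t) : ∫ x in t, f x ∂μ = ∫ x in t, g x ∂μ := by
  have h_total : ∫ x, f x ∂μ = ∫ x, g x ∂μ := by
    simpa only [Measure.restrict_univ] using basic _ h_univ
  induction t, ht using MeasurableSpace.induction_on_inter h_eq h_inter with
  | empty => simp
  | basic t ht => exact basic t ht
  | compl t ht h =>
    rw [setIntegral_compl (hm t ht) hf, setIntegral_compl (hm t ht) hg, h, h_total]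
  | iUnion t hdisj ht h =>
    rw [integral_iUnion (fun i => hm _ (ht i)) hdisj hf.integrableOn,
      integral_iUnion (fun i => hm _ (ht i)) hdisj hg.integrableOn]
    exact tsum_congr h

variable {Ω₁ Ω₂ : Type*} {m₁ m0₁ : MeasurableSpace Ω₁} {m₂ m0₂ : MeasurableSpace Ω₂}
  {ι κ : Type*} [Preorder ι] [Preorder κ]

namespace Filtration

def prod (ℱ₁ : Filtration ι m0₁) (ℱ₂ : Filtration ι m0₂) : Filtration ι (m0₁.prod m0₂) where
  seq i := (ℱ₁ i).prod (ℱ₂ i)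
  mono' _ _ hij := sup_le_sup (MeasurableSpace.comap_mono (ℱ₁.mono hij))
    (MeasurableSpace.comap_mono (ℱ₂.mono hij))
  le' i := sup_le_sup (MeasurableSpace.comap_mono (ℱ₁.le i))
    (MeasurableSpace.comap_mono (ℱ₂.le i))

def comp (ℱ : Filtration ι m0₁) {τ : κ → ι} (hτ : Monotone τ) : Filtration κ m0₁ where
  seq k := ℱ (τ k)
  mono' _ _ hij := ℱ.mono (hτ hij)
  le' k := ℱ.le (τ k)

end Filtration

theorem Martingale.comp_monotone [CompleteSpace E] {μ : Measure Ω₁} {f : ι → Ω₁ → E}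
    {ℱ : Filtration ι m0₁} (hf : Martingale f ℱ μ) {τ : κ → ι} (hτ : Monotone τ) :
    Martingale (fun k => f (τ k)) (ℱ.comp hτ) μ :=
  ⟨fun k => hf.stronglyAdapted (τ k), fun _ _ hij => hf.condExp_ae_eq (hτ hij)⟩

variable {μ₁ : Measure Ω₁} {μ₂ : Measure Ω₂} [IsFiniteMeasure μ₁] [IsFiniteMeasure μ₂]

theorem condExp_mul_prod (hm₁ : m₁ ≤ m0₁) (hm₂ : m₂ ≤ m0₂) {F : Ω₁ → ℝ} {G : Ω₂ → ℝ}
    (hF : Integrable F μ₁) (hG : Integrable G μ₂) :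
    (μ₁.prod μ₂)[fun ω => F ω.1 * G ω.2 | m₁.prod m₂]
      =ᵐ[μ₁.prod μ₂] fun ω => μ₁[F|m₁] ω.1 * μ₂[G|m₂] ω.2 := by
  have hm : m₁.prod m₂ ≤ m0₁.prod m0₂ :=
    sup_le_sup (MeasurableSpace.comap_mono hm₁) (MeasurableSpace.comap_mono hm₂)
  have hmeas : StronglyMeasurable[m₁.prod m₂] fun ω : Ω₁ × Ω₂ => μ₁[F|m₁] ω.1 * μ₂[G|m₂] ω.2 :=
    (stronglyMeasurable_condExp.comp_measurable measurable_fst).mul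
      (stronglyMeasurable_condExp.comp_measurable measurable_snd)
  refine (ae_eq_condExp_of_forall_setIntegral_eq hm (hF.mul_prod hG)
    (fun _ _ _ => (integrable_condExp.mul_prod integrable_condExp).integrableOn)
    (fun S hS _ => ?_) hmeas.aestronglyMeasurable).symm
  refine setIntegral_eq_of_isPiSystem hm (@generateFrom_prod _ _ m₁ m₂).symm
    (@isPiSystem_prod _ _ m₁ m₂)
    ⟨_, MeasurableSet.univ, _, MeasurableSet.univ, Set.univ_prod_univ⟩
    (integrable_condExp.mul_prod integrable_condExp) (hF.mul_prod hG) ?_ hS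
  rintro _ ⟨A, hA, B, hB, rfl⟩
  rw [setIntegral_prod_mul, setIntegral_prod_mul, setIntegral_condExp hm₁ hF hA,
    setIntegral_condExp hm₂ hG hB]

theorem Martingale.mul_prod {F : ι → Ω₁ → ℝ} {G : ι → Ω₂ → ℝ} {ℱ₁ : Filtration ι m0₁}
    {ℱ₂ : Filtration ι m0₂} (hF : Martingale F ℱ₁ μ₁) (hG : Martingale G ℱ₂ μ₂) :
    Martingale (fun i ω => F i ω.1 * G i ω.2) (ℱ₁.prod ℱ₂) (μ₁.prod μ₂) := by
  refine ⟨fun i => ?_, fun i j hij => ?_⟩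
  · exact ((hF.stronglyAdapted i).comp_measurable measurable_fst).mul
      ((hG.stronglyAdapted i).comp_measurable measurable_snd)
  · refine (condExp_mul_prod (ℱ₁.le i) (ℱ₂.le i) (hF.integrable j) (hG.integrable j)).trans ?_
    exact (Measure.quasiMeasurePreserving_fst.ae_eq_comp (hF.condExp_ae_eq hij)).mul
      (Measure.quasiMeasurePreserving_snd.ae_eq_comp (hG.condExp_ae_eq hij))

end MeasureTheory

section L1

variable {X Y : Type*} [Fintype X] [Fintype Y]

theorem sum_abs_sub_mul_right (a a' : X → ℝ) (b : Y → ℝ) :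
    ∑ z : X × Y, |a z.1 * b z.2 - a' z.1 * b z.2| = (∑ x, |a x - a' x|) * ∑ y, |b y| := by
  simp only [Fintype.sum_prod_type, ← sub_mul, abs_mul, Fintype.sum_mul_sum]

theorem sum_abs_mul_sub_left (a : X → ℝ) (b b' : Y → ℝ) :
    ∑ z : X × Y, |a z.1 * b z.2 - a z.1 * b' z.2| = (∑ x, |a x|) * ∑ y, |b y - b' y| := by
  simp only [Fintype.sum_prod_type, ← mul_sub, abs_mul, Fintype.sum_mul_sum]

theorem sum_abs_sub_le_two {a b : X → ℝ} (ha : a ∈ stdSimplex ℝ X) (hb : b ∈ stdSimplex ℝ X) :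
    ∑ x, |a x - b x| ≤ 2 :=
  calc ∑ x, |a x - b x| ≤ ∑ x, (a x + b x) :=
        sum_le_sum fun x _ => abs_sub_le_of_nonneg_of_le (ha.1 x)
          (le_add_of_nonneg_right (hb.1 x)) (hb.1 x) (le_add_of_nonneg_left (ha.1 x))
    _ = 2 := by rw [sum_add_distrib, ha.2, hb.2]; norm_num

end L1

section Variation

variable {Ω Ω₁ Ω₂ X X₁ X₂ : Type*} [Fintype X] [Fintype X₁] [Fintype X₂]
  [MeasurableSpace Ω] [MeasurableSpace Ω₁] [MeasurableSpace Ω₂]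

noncomputable def totalVariation (μ : Measure Ω) (f : ℕ → Ω → X → ℝ) (k : ℕ) : ℝ :=
  ∑ t ∈ range k, ∫ ω, ∑ x, |f (t + 1) ω x - f t ω x| ∂μ

theorem sum_Icc_integral_eq_totalVariation (μ : Measure Ω) (f : ℕ → Ω → X → ℝ) (k : ℕ) :
    ∑ t ∈ Icc 1 k, ∫ ω, ∑ x, |f t ω x - f (t - 1) ω x| ∂μ = totalVariation μ f k := by
  have := sum_Ico_add' (fun t => ∫ ω, ∑ x, |f t ω x - f (t - 1) ω x| ∂μ) 0 k 1
  simpa [totalVariation, Ico_add_one_right_eq_Icc] using this.symm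

theorem totalVariation_le (μ : Measure Ω) [IsProbabilityMeasure μ] {f : ℕ → Ω → X → ℝ}
    (hf : ∀ t ω, f t ω ∈ stdSimplex ℝ X) (k : ℕ) :
    totalVariation μ f k ≤ 2 * k := by
  calc totalVariation μ f k ≤ ∑ _t ∈ range k, (2 : ℝ) := by
        refine sum_le_sum fun t _ => ?_
        calc ∫ ω, ∑ x, |f (t + 1) ω x - f t ω x| ∂μ ≤ ∫ _ω, (2 : ℝ) ∂μ :=
              integral_mono_of_nonneg (ae_of_all _ fun ω => sum_nonneg fun x _ => abs_nonneg _)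
                (integrable_const 2) (ae_of_all _ fun ω => sum_abs_sub_le_two (hf _ ω) (hf t ω))
          _ = 2 := by simp
    _ = 2 * k := by simp [mul_comm]

def concatProd (f : ℕ → Ω₁ → X₁ → ℝ) (g : ℕ → Ω₂ → X₂ → ℝ) (k : ℕ) :
    ℕ → Ω₁ × Ω₂ → X₁ × X₂ → ℝ :=
  fun t ω z => f (min t k) ω.1 z.1 * g (t - k) ω.2 z.2

variable {μ₁ : Measure Ω₁} {μ₂ : Measure Ω₂} [IsProbabilityMeasure μ₁] [IsProbabilityMeasure μ₂]
  {f : ℕ → Ω₁ → X₁ → ℝ} {g : ℕ → Ω₂ → X₂ → ℝ} {k : ℕ}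

theorem integral_concatProd_step_of_lt (hg : ∀ ω, ∑ y, |g 0 ω y| = 1) {t : ℕ} (ht : t < k) :
    ∫ ω, ∑ z, |concatProd f g k (t + 1) ω z - concatProd f g k t ω z| ∂(μ₁.prod μ₂)
      = ∫ ω, ∑ x, |f (t + 1) ω x - f t ω x| ∂μ₁ := by
  have ht' : t + 1 ≤ k := ht
  simp only [concatProd, min_eq_left ht.le, min_eq_left ht', Nat.sub_eq_zero_of_le ht',
    Nat.sub_eq_zero_of_le ht.le, sum_abs_sub_mul_right, hg, mul_one]
  rw [integral_fun_fst (fun ω => ∑ x, |f (t + 1) ω x - f t ω x|), probReal_univ, one_smul]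

theorem integral_concatProd_step_add (hf : ∀ ω, ∑ x, |f k ω x| = 1) (u : ℕ) :
    ∫ ω, ∑ z, |concatProd f g k (k + u + 1) ω z - concatProd f g k (k + u) ω z| ∂(μ₁.prod μ₂)
      = ∫ ω, ∑ y, |g (u + 1) ω y - g u ω y| ∂μ₂ := by
  simp only [concatProd, add_assoc, min_eq_right (Nat.le_add_right k _), Nat.add_sub_cancel_left,
    sum_abs_mul_sub_left, hf, one_mul]
  rw [integral_fun_snd (fun ω => ∑ y, |g (u + 1) ω y - g u ω y|), probReal_univ, one_smul]

theorem totalVariation_concatProd (hf : ∀ ω, ∑ x, |f k ω x| = 1)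
    (hg : ∀ ω, ∑ y, |g 0 ω y| = 1) (l : ℕ) :
    totalVariation (μ₁.prod μ₂) (concatProd f g k) (k + l)
      = totalVariation μ₁ f k + totalVariation μ₂ g l := by
  rw [totalVariation, sum_range_add]
  congr 1
  · exact sum_congr rfl fun t ht => integral_concatProd_step_of_lt hg (mem_range.1 ht)
  · exact sum_congr rfl fun u _ => integral_concatProd_step_add hf u

end Variation

def variations (k : ℕ) (X : Type) [Fintype X] (p : X → ℝ) : Set ℝ :=
  { v | ∃ (Ω : Type) (m : MeasurableSpace Ω) (μ : Measure Ω)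
    (_ : IsProbabilityMeasure μ) (ℱ : Filtration ℕ m) (f : ℕ → Ω → X → ℝ),
    (∀ t ω x, 0 ≤ f t ω x) ∧ (∀ t ω, ∑ x, f t ω x = 1) ∧ (∀ ω, f 0 ω = p) ∧
    (∀ x, Martingale (fun t ω => f t ω x) ℱ μ) ∧
    v = ∑ t ∈ Finset.Icc 1 k, ∫ ω, ∑ x, |f t ω x - f (t - 1) ω x| ∂μ }

theorem V_eq_sSup_variations (k : ℕ) (X : Type) [Fintype X] (p : X → ℝ) :
    V k X p = sSup (variations k X p) := rfl

theorem zero_mem_variations (k : ℕ) {X : Type} [Fintype X] {p : X → ℝ}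
    (hp : p ∈ stdSimplex ℝ X) : (0 : ℝ) ∈ variations k X p :=
  ⟨Unit, ⊤, Measure.dirac (), inferInstance, ⊥, fun _ _ => p,
    fun _ _ => hp.1, fun _ _ => hp.2, fun _ => rfl, fun _ => martingale_const _ _ _, by simp⟩

theorem variations_bddAbove (k : ℕ) (X : Type) [Fintype X] (p : X → ℝ) :
    BddAbove (variations k X p) := by
  refine ⟨2 * k, ?_⟩
  rintro v ⟨Ω, m, μ, hμ, ℱ, f, hf0, hf1, -, -, rfl⟩
  rw [sum_Icc_integral_eq_totalVariation]
  exact totalVariation_le μ (fun t ω => ⟨hf0 t ω, hf1 t ω⟩) k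

theorem add_mem_variations {X₁ X₂ : Type} [Fintype X₁] [Fintype X₂]
    {p : X₁ → ℝ} {q : X₂ → ℝ} {k₁ k₂ : ℕ} {a b : ℝ}
    (ha : a ∈ variations k₁ X₁ p) (hb : b ∈ variations k₂ X₂ q) :
    a + b ∈ variations (k₁ + k₂) (X₁ × X₂) (fun z => p z.1 * q z.2) := by
  obtain ⟨Ω₁, m₁, μ₁, hμ₁, ℱ₁, f, hf0, hf1, hfp, hfM, rfl⟩ := ha
  obtain ⟨Ω₂, m₂, μ₂, hμ₂, ℱ₂, g, hg0, hg1, hgq, hgM, rfl⟩ := hb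
  have hτ₁ : Monotone fun t => min t k₁ := fun _ _ h => min_le_min_right k₁ h
  have hτ₂ : Monotone fun t => t - k₁ := fun _ _ h => Nat.sub_le_sub_right h k₁
  refine ⟨Ω₁ × Ω₂, m₁.prod m₂, μ₁.prod μ₂, inferInstance, (ℱ₁.comp hτ₁).prod (ℱ₂.comp hτ₂),
    concatProd f g k₁, fun t ω z => mul_nonneg (hf0 _ _ _) (hg0 _ _ _), fun t ω => ?_,
    fun ω => ?_, fun z => ((hfM z.1).comp_monotone hτ₁).mul_prod ((hgM z.2).comp_monotone hτ₂),
    ?_⟩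
  · simp only [concatProd, Fintype.sum_prod_type, ← Fintype.sum_mul_sum, hf1, hg1, one_mul]
  · ext z
    simp [concatProd, hfp, hgq]
  · simp only [sum_Icc_integral_eq_totalVariation]
    refine (totalVariation_concatProd (fun ω => ?_) (fun ω => ?_) k₂).symm
    · simp only [abs_of_nonneg (hf0 _ ω _), hf1]
    · simp only [abs_of_nonneg (hg0 _ ω _), hg1]

open Pointwise in
theorem stmt14_general {X₁ X₂ : Type} [Fintype X₁] [Fintype X₂]
    (p : X₁ → ℝ) (q : X₂ → ℝ)
    (hpnn : ∀ x, 0 ≤ p x) (hpsum : ∑ x, p x = 1)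
    (hqnn : ∀ y, 0 ≤ q y) (hqsum : ∑ y, q y = 1)
    (k₁ k₂ : ℕ) :
    V k₁ X₁ p + V k₂ X₂ q
      ≤ V (k₁ + k₂) (X₁ × X₂) (fun z => p z.1 * q z.2) := by
  have hne₁ : (variations k₁ X₁ p).Nonempty := ⟨0, zero_mem_variations k₁ ⟨hpnn, hpsum⟩⟩
  have hne₂ : (variations k₂ X₂ q).Nonempty := ⟨0, zero_mem_variations k₂ ⟨hqnn, hqsum⟩⟩
  simp only [V_eq_sSup_variations]
  rw [← csSup_add hne₁ (variations_bddAbove _ _ _) hne₂ (variations_bddAbove _ _ _)]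
  exact csSup_le_csSup (variations_bddAbove _ _ _) (hne₁.add hne₂)
    (Set.add_subset_iff.2 fun _ ha _ hb => add_mem_variations ha hb)

/-- Superadditivity of the maximal variation under products of initial distributions:
`V(k₁, p) + V(k₂, q) ≤ V(k₁ + k₂, p ⊗ q)`. -/
theorem stmt14 {X₁ X₂ : Type} [Fintype X₁] [Fintype X₂]
    (p : X₁ → ℝ) (q : X₂ → ℝ)
    (hpnn : ∀ x, 0 ≤ p x) (hpsum : ∑ x, p x = 1)
    (hqnn : ∀ y, 0 ≤ q y) (hqsum : ∑ y, q y = 1)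
    (k₁ k₂ : ℕ) (hk₁ : 0 < k₁) (hk₂ : 0 < k₂) :
    V k₁ X₁ p + V k₂ X₂ q
      ≤ V (k₁ + k₂) (X₁ × X₂) (fun z => p z.1 * q z.2) :=
  stmt14_general p q hpnn hpsum hqnn hqsum k₁ k₂
end

section
/- For every positive integer ℓ there exists an ℓ-step martingale p_0, ..., p_ℓ of probability vectors on a set X with 2^ℓ elements, starting at the uniform distribution, such that ||p_t - p_{t-1}||_1 = 1 almost surely for each t, hence the total variation E Σ_{t=1}^ℓ ||p_t - p_{t-1}||_1 = ℓ. -/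
/-!
Take `Ω = X = {0,1}^ℓ` with the uniform measure and let `p_t(ω)` be the uniform distribution on
the prefix cylinder of `ω` of length `t`, i.e. on the points agreeing with `ω` in the first `t`
coordinates. Since `p_t(ω)(x) = p_t(x)(ω)`, integrating `ω ↦ p_k(ω)(x)` over an event determined
by the first `t ≤ k` coordinates gives the indicator of that event at `x`, whatever `k` is: this
is the martingale property. For `t < ℓ` the cylinder of length `t + 1` is half of the one of
length `t`, so `|p_{t+1}(ω) - p_t(ω)| = p_t(ω)` pointwise, whose total mass is `1`.
-/

open MeasureTheory ProbabilityTheory Finset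

section UniformWeight

variable {β : Type*} [DecidableEq β]

noncomputable def uniformWeight (A : Finset β) (y : β) : ℝ := if y ∈ A then (#A : ℝ)⁻¹ else 0

lemma uniformWeight_nonneg (A : Finset β) (y : β) : 0 ≤ uniformWeight A y := by
  unfold uniformWeight; split_ifs <;> positivity

lemma sum_mul_uniformWeight [Fintype β] {A : Finset β} (hA : A.Nonempty) {g : β → ℝ} {c : ℝ}
    (hg : ∀ y ∈ A, g y = c) : ∑ y, g y * uniformWeight A y = c := by
  have hA' : (#A : ℝ) ≠ 0 := by exact_mod_cast hA.card_pos.ne'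
  calc ∑ y, g y * uniformWeight A y = ∑ y, if y ∈ A then c * (#A : ℝ)⁻¹ else 0 :=
        sum_congr rfl fun y _ => by by_cases hy : y ∈ A <;> simp [uniformWeight, hy, hg]
    _ = c := by rw [sum_ite_mem, univ_inter, sum_const, nsmul_eq_mul]; field_simp

lemma sum_uniformWeight [Fintype β] {A : Finset β} (hA : A.Nonempty) :
    ∑ y, uniformWeight A y = 1 := by
  simpa using sum_mul_uniformWeight hA (g := fun _ => 1) fun _ _ => rfl

lemma abs_uniformWeight_sub_of_card_eq_two_mul {A B : Finset β} (hAB : A ⊆ B)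
    (hcard : #B = 2 * #A) (y : β) :
    |uniformWeight A y - uniformWeight B y| = uniformWeight B y := by
  have hB : (#B : ℝ) = 2 * #A := by exact_mod_cast hcard
  by_cases hyA : y ∈ A
  · have : (#A : ℝ) ≠ 0 := by exact_mod_cast (card_pos.2 ⟨y, hyA⟩).ne'
    simp only [uniformWeight, hyA, hAB hyA, if_true, hB]
    rw [abs_of_nonneg] <;> field_simp <;> norm_num
  · simp only [uniformWeight, hyA, if_false, zero_sub, abs_neg]
    exact abs_of_nonneg (uniformWeight_nonneg B y)

end UniformWeight

def initSeg (ℓ t : ℕ) : Finset (Fin ℓ) := {i | (i : ℕ) < t}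

lemma initSeg_mono {ℓ s t : ℕ} (hst : s ≤ t) : initSeg ℓ s ⊆ initSeg ℓ t := fun i hi => by
  simp only [initSeg, mem_filter, mem_univ, true_and] at hi ⊢; omega

section PrefixCylinder

variable {ℓ : ℕ} {α : Type*} [DecidableEq α] [Fintype α]

def prefixCylinder (t : ℕ) (ω : Fin ℓ → α) : Finset (Fin ℓ → α) :=
  {x | (initSeg ℓ t).restrict x = (initSeg ℓ t).restrict ω}

variable {t : ℕ} {ω x : Fin ℓ → α}

lemma mem_prefixCylinder :
    x ∈ prefixCylinder t ω ↔ (initSeg ℓ t).restrict x = (initSeg ℓ t).restrict ω := by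
  simp [prefixCylinder]

lemma self_mem_prefixCylinder : ω ∈ prefixCylinder t ω := mem_prefixCylinder.2 rfl

lemma mem_prefixCylinder_comm : x ∈ prefixCylinder t ω ↔ ω ∈ prefixCylinder t x := by
  simp only [mem_prefixCylinder, eq_comm]

lemma prefixCylinder_eq_of_mem (h : x ∈ prefixCylinder t ω) :
    prefixCylinder t x = prefixCylinder t ω := by
  ext z; simp only [mem_prefixCylinder, mem_prefixCylinder.1 h]

lemma prefixCylinder_subset_of_le {s : ℕ} (hst : s ≤ t) :
    prefixCylinder t ω ⊆ prefixCylinder s ω := by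
  intro x hx
  rw [mem_prefixCylinder, ← restrict₂_comp_restrict (initSeg_mono hst)]
  exact congrArg (restrict₂ _) (mem_prefixCylinder.1 hx)

lemma prefixCylinder_zero : prefixCylinder 0 ω = univ := by
  ext x; simp [mem_prefixCylinder, initSeg, funext_iff]

lemma card_prefixCylinder : #(prefixCylinder t ω) = Fintype.card α ^ (ℓ - t) := by
  have hpi : prefixCylinder t ω =
      Fintype.piFinset fun i : Fin ℓ => if (i : ℕ) < t then {ω i} else univ := by
    ext x
    simp only [mem_prefixCylinder, funext_iff, Fintype.mem_piFinset, initSeg, Subtype.forall,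
      restrict, mem_filter, mem_univ, true_and]
    refine forall_congr' fun i => ?_
    split_ifs with hi <;> simp [hi]
  have hcount : #{i : Fin ℓ | ¬ (i : ℕ) < t} = ℓ - t := by
    rw [filter_not, card_sdiff_of_subset (filter_subset _ _), Fin.card_filter_val_lt,
      card_univ, Fintype.card_fin]
    omega
  simp only [hpi, Fintype.card_piFinset, apply_ite card, card_singleton, card_univ]
  rw [prod_ite, prod_const_one, prod_const, hcount, one_mul]

lemma uniformWeight_prefixCylinder_comm :
    uniformWeight (prefixCylinder t ω) x = uniformWeight (prefixCylinder t x) ω := by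
  by_cases h : x ∈ prefixCylinder t ω
  · rw [uniformWeight, uniformWeight, if_pos h, if_pos (mem_prefixCylinder_comm.1 h),
      prefixCylinder_eq_of_mem h]
  · simp [uniformWeight, h, mem_prefixCylinder_comm.not.1 h]

end PrefixCylinder

lemma sum_abs_uniformWeight_prefixCylinder_succ_sub {ℓ : ℕ} {α : Type*} [DecidableEq α]
    [Fintype α] (hα : Fintype.card α = 2) {t : ℕ} (ht : t < ℓ) (ω : Fin ℓ → α) :
    ∑ x, |uniformWeight (prefixCylinder (t + 1) ω) x - uniformWeight (prefixCylinder t ω) x|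
      = 1 := by
  have hcard : #(prefixCylinder t ω) = 2 * #(prefixCylinder (t + 1) ω) := by
    rw [card_prefixCylinder, card_prefixCylinder, hα, ← pow_succ']
    congr 1
    omega
  simp_rw [abs_uniformWeight_sub_of_card_eq_two_mul (prefixCylinder_subset_of_le t.le_succ) hcard]
  exact sum_uniformWeight ⟨ω, self_mem_prefixCylinder⟩

lemma setIntegral_uniformOn_univ {Ω : Type*} [Fintype Ω] [MeasurableSpace Ω]
    [MeasurableSingletonClass Ω] (s : Set Ω) (g : Ω → ℝ) :
    ∫ ω in s, g ω ∂uniformOn Set.univ = (Fintype.card Ω : ℝ)⁻¹ * ∑ ω, s.indicator g ω := by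
  rw [← integral_indicator (MeasurableSet.of_discrete), integral_fintype Integrable.of_finite,
    mul_sum]
  refine sum_congr rfl fun ω _ => ?_
  simp [Measure.real, uniformOn_univ]

section PrefixFiltration

variable (ℓ : ℕ) (α : Type*) [DecidableEq α] [Fintype α] [MeasurableSpace α]
  [MeasurableSingletonClass α]

def prefixFiltration : Filtration ℕ (MeasurableSpace.pi : MeasurableSpace (Fin ℓ → α)) where
  seq t := MeasurableSpace.comap (initSeg ℓ t).restrict ⊤
  mono' s t hst := by
    dsimp only
    rw [← restrict₂_comp_restrict (initSeg_mono hst), ← MeasurableSpace.comap_comp]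
    exact MeasurableSpace.comap_mono le_top
  le' _ _ _ := MeasurableSet.of_discrete

variable {ℓ α} {t : ℕ}

lemma measurable_prefixFiltration {β : Type*} [MeasurableSpace β] {g : (Fin ℓ → α) → β}
    (hg : ∀ ω, ∀ x ∈ prefixCylinder t ω, g x = g ω) :
    Measurable[prefixFiltration ℓ α t] g := by
  intro B _
  refine ⟨(initSeg ℓ t).restrict '' (g ⁻¹' B), trivial,
    Set.ext fun x => ⟨?_, fun hx => ⟨x, hx, rfl⟩⟩⟩
  rintro ⟨y, hy, hyx⟩
  rwa [Set.mem_preimage, ← hg x y (mem_prefixCylinder.2 hyx)]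

lemma mem_iff_of_mem_prefixCylinder {s : Set (Fin ℓ → α)}
    (hs : MeasurableSet[prefixFiltration ℓ α t] s) {ω x : Fin ℓ → α}
    (hx : x ∈ prefixCylinder t ω) : x ∈ s ↔ ω ∈ s := by
  obtain ⟨u, -, rfl⟩ := hs
  simp only [Set.mem_preimage, mem_prefixCylinder.1 hx]

lemma sum_indicator_uniformWeight_prefixCylinder {s : Set (Fin ℓ → α)}
    (hs : MeasurableSet[prefixFiltration ℓ α t] s) {k : ℕ} (htk : t ≤ k) (y : Fin ℓ → α) :
    ∑ ω, s.indicator (fun ω => uniformWeight (prefixCylinder k ω) y) ω = s.indicator 1 y :=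
  calc ∑ ω, s.indicator (fun ω => uniformWeight (prefixCylinder k ω) y) ω
      = ∑ ω, s.indicator 1 ω * uniformWeight (prefixCylinder k y) ω :=
        sum_congr rfl fun ω _ => by
          rw [uniformWeight_prefixCylinder_comm]
          by_cases hω : ω ∈ s <;> simp [hω]
    _ = s.indicator 1 y := sum_mul_uniformWeight ⟨y, self_mem_prefixCylinder⟩ fun ω hω => by
        have hωy := mem_iff_of_mem_prefixCylinder hs (prefixCylinder_subset_of_le htk hω)
        by_cases hy : y ∈ s <;> simp [hy, hωy]

lemma martingale_uniformWeight_prefixCylinder (y : Fin ℓ → α) :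
    Martingale (fun t ω => uniformWeight (prefixCylinder t ω) y) (prefixFiltration ℓ α)
      (uniformOn Set.univ) :=
  martingale_of_setIntegral_eq_succ
    (fun _ => (measurable_prefixFiltration fun _ _ hx => by
      rw [prefixCylinder_eq_of_mem hx]).stronglyMeasurable)
    (fun _ => Integrable.of_finite)
    fun _ _ hs => by
      rw [setIntegral_uniformOn_univ, setIntegral_uniformOn_univ,
        sum_indicator_uniformWeight_prefixCylinder hs le_rfl,
        sum_indicator_uniformWeight_prefixCylinder hs (Nat.le_succ _)]

end PrefixFiltration

theorem stmt17_general (ℓ : ℕ) :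
    ∃ (Ω : Type) (m : MeasurableSpace Ω) (μ : Measure Ω)
      (_ : IsProbabilityMeasure μ) (ℱ : Filtration ℕ m)
      (f : ℕ → Ω → Fin (2 ^ ℓ) → ℝ),
      (∀ t ω x, 0 ≤ f t ω x) ∧ (∀ t ω, ∑ x, f t ω x = 1) ∧
      (∀ ω, f 0 ω = fun _ => ((2 : ℝ) ^ ℓ)⁻¹) ∧
      (∀ x, Martingale (fun t ω => f t ω x) ℱ μ) ∧
      (∀ t ∈ Finset.Icc 1 ℓ, ∀ᵐ ω ∂μ, ∑ x, |f t ω x - f (t - 1) ω x| = 1) ∧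
      ∑ t ∈ Finset.Icc 1 ℓ, ∫ ω, ∑ x, |f t ω x - f (t - 1) ω x| ∂μ = ℓ := by
  let e : (Fin ℓ → Fin 2) ≃ Fin (2 ^ ℓ) := finFunctionFinEquiv
  have hvar : ∀ t ∈ Icc 1 ℓ, ∀ ω, ∑ x, |uniformWeight (prefixCylinder t ω) (e.symm x) -
      uniformWeight (prefixCylinder (t - 1) ω) (e.symm x)| = 1 := by
    intro t ht ω
    obtain ⟨s, rfl⟩ := Nat.exists_eq_add_one.2 (mem_Icc.1 ht).1
    rw [Nat.add_sub_cancel, e.symm.sum_comp fun y => |uniformWeight (prefixCylinder (s + 1) ω) y -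
      uniformWeight (prefixCylinder s ω) y|]
    exact sum_abs_uniformWeight_prefixCylinder_succ_sub (Fintype.card_fin 2)
      (mem_Icc.1 ht).2 ω
  refine ⟨Fin ℓ → Fin 2, inferInstance, uniformOn Set.univ, inferInstance,
    prefixFiltration ℓ (Fin 2), fun t ω x => uniformWeight (prefixCylinder t ω) (e.symm x),
    fun _ _ _ => uniformWeight_nonneg _ _, fun t ω => ?_, fun ω => ?_,
    fun _ => martingale_uniformWeight_prefixCylinder _, fun t ht => ae_of_all _ (hvar t ht), ?_⟩
  · rw [e.symm.sum_comp (uniformWeight _)]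
    exact sum_uniformWeight ⟨ω, self_mem_prefixCylinder⟩
  · funext x
    simp [uniformWeight, prefixCylinder_zero]
  · rw [sum_congr rfl fun t ht => by rw [funext (hvar t ht)]]
    simp

/-- For every positive integer `ℓ` there exists an `ℓ`-step martingale of probability
vectors on a set with `2 ^ ℓ` elements, starting at the uniform distribution, whose
one-step `ℓ₁` variation equals `1` almost surely at each step, so that the expected
total variation equals `ℓ`. -/
theorem stmt17 (ℓ : ℕ) (hℓ : 0 < ℓ) :
    ∃ (Ω : Type) (m : MeasurableSpace Ω) (μ : Measure Ω)
      (_ : IsProbabilityMeasure μ) (ℱ : Filtration ℕ m)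
      (f : ℕ → Ω → Fin (2 ^ ℓ) → ℝ),
      (∀ t ω x, 0 ≤ f t ω x) ∧ (∀ t ω, ∑ x, f t ω x = 1) ∧
      (∀ ω, f 0 ω = fun _ => ((2 : ℝ) ^ ℓ)⁻¹) ∧
      (∀ x, Martingale (fun t ω => f t ω x) ℱ μ) ∧
      (∀ t ∈ Finset.Icc 1 ℓ, ∀ᵐ ω ∂μ, ∑ x, |f t ω x - f (t - 1) ω x| = 1) ∧
      ∑ t ∈ Finset.Icc 1 ℓ, ∫ ω, ∑ x, |f t ω x - f (t - 1) ω x| ∂μ = ℓ :=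
  stmt17_general ℓ
end

section
/- Suppose there is a constant C_1 > 0 with V(k,2) ≥ C_1 sqrt(k) for all k ≥ 1, and that V satisfies V(k_1,d_1) + V(k_2,d_2) ≤ V(k_1+k_2, d_1 d_2) and monotonicity in both arguments. Then there is a constant C > 0 such that for all positive integers k and d with 2 ≤ d ≤ 2^k, V(k,d) ≥ C sqrt(k log d). -/
open Real

/-- Abstract form of Theorem 2: if `V : ℕ → ℕ → ℝ` satisfies `V k 2 ≥ C₁ √k`,
superadditivity `V k₁ d₁ + V k₂ d₂ ≤ V (k₁+k₂) (d₁ d₂)`, and monotonicity in both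
arguments, then there is `C > 0` with `V k d ≥ C sqrt (k log d)` for all
`1 ≤ k`, `2 ≤ d ≤ 2 ^ k`. -/
theorem stmt18 (V : ℕ → ℕ → ℝ)
    (C₁ : ℝ) (hC₁ : 0 < C₁)
    (hlow : ∀ k : ℕ, 1 ≤ k → C₁ * Real.sqrt k ≤ V k 2)
    (hsuper : ∀ k₁ k₂ d₁ d₂ : ℕ, V k₁ d₁ + V k₂ d₂ ≤ V (k₁ + k₂) (d₁ * d₂))
    (hmono : ∀ k k' d d' : ℕ, k ≤ k' → d ≤ d' → V k d ≤ V k' d') :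
    ∃ C : ℝ, 0 < C ∧ ∀ k d : ℕ, 1 ≤ k → 2 ≤ d → d ≤ 2 ^ k →
      C * Real.sqrt (k * Real.log d) ≤ V k d := by
  have hlog2 : (0:ℝ) < Real.log 2 := Real.log_pos (by norm_num)
  have hslog2 : (0:ℝ) < Real.sqrt (Real.log 2) := Real.sqrt_pos.mpr hlog2
  refine ⟨C₁ / (2 * Real.sqrt (Real.log 2)), by positivity, ?_⟩
  intro k d hk hd hdk
  set ℓ := Nat.log 2 d with hℓdef
  have hℓ1 : 1 ≤ ℓ := Nat.log_pos (by norm_num) hd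
  have hpow : 2 ^ ℓ ≤ d := Nat.pow_log_le_self 2 (by omega)
  have hlt : d < 2 ^ (ℓ + 1) := Nat.lt_pow_succ_log_self (by norm_num) d
  have hℓk : ℓ ≤ k := by
    have h : 2 ^ ℓ ≤ 2 ^ k := le_trans hpow hdk
    exact (Nat.pow_le_pow_iff_right (by norm_num)).mp h
  set m := k / ℓ with hm
  have hm1 : 1 ≤ m := (Nat.one_le_div_iff (by omega)).mpr hℓk
  have hk2 : k ≤ 2 * ℓ * m := by
    have h1 : ℓ * m + k % ℓ = k := Nat.div_add_mod k ℓ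
    have h2 := Nat.mod_lt k (show 0 < ℓ by omega)
    have h3 : ℓ * 1 ≤ ℓ * m := Nat.mul_le_mul_left ℓ hm1
    nlinarith
  -- iterated superadditivity
  have iter : ∀ n : ℕ, 1 ≤ n → (n : ℝ) * V m 2 ≤ V (n * m) (2 ^ n) := by
    intro n hn
    induction n, hn using Nat.le_induction with
    | base => simp
    | succ n hn ih =>
      have h := hsuper (n * m) m (2 ^ n) 2
      have he : (n + 1) * m = n * m + m := by ring
      have he2 : (2:ℕ) ^ (n + 1) = 2 ^ n * 2 := by ring
      rw [he, he2]
      push_cast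
      calc ((n:ℝ)+1) * V m 2 = n * V m 2 + V m 2 := by ring
        _ ≤ V (n*m) (2^n) + V m 2 := by linarith
        _ ≤ V (n*m + m) (2^n * 2) := h
  have h1 : (ℓ : ℝ) * V m 2 ≤ V k d := by
    refine le_trans (iter ℓ hℓ1) (hmono _ _ _ _ ?_ hpow)
    calc ℓ * m = m * ℓ := by ring
      _ ≤ k := Nat.div_mul_le_self k ℓ
  have h2 : C₁ * Real.sqrt m ≤ V m 2 := hlow m hm1
  -- numeric estimates
  have hlogd : Real.log d ≤ 2 * ℓ * Real.log 2 := by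
    have hd0 : (0:ℝ) < d := by positivity
    have := Real.log_le_log hd0 (show (d:ℝ) ≤ 2 ^ (ℓ+1) by exact_mod_cast hlt.le)
    rw [Real.log_pow] at this
    push_cast at this
    have hℓ1' : (1:ℝ) ≤ ℓ := by exact_mod_cast hℓ1
    nlinarith
  have hlogd0 : 0 ≤ Real.log d := Real.log_nonneg (by exact_mod_cast (show (1:ℕ) ≤ d by omega))
  have hkm : (k:ℝ) ≤ 2 * ℓ * m := by exact_mod_cast hk2
  have hkey : (k:ℝ) * Real.log d ≤ (2*ℓ)^2 * (m * Real.log 2) := by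
    have hk0 : (0:ℝ) ≤ k := by positivity
    nlinarith
  have hsq : Real.sqrt ((k:ℝ) * Real.log d) ≤ 2 * ℓ * (Real.sqrt m * Real.sqrt (Real.log 2)) := by
    calc Real.sqrt ((k:ℝ) * Real.log d) ≤ Real.sqrt ((2*ℓ)^2 * (m * Real.log 2)) :=
          Real.sqrt_le_sqrt hkey
      _ = 2 * ℓ * (Real.sqrt m * Real.sqrt (Real.log 2)) := by
          rw [Real.sqrt_mul (by positivity), Real.sqrt_sq (by positivity),
            Real.sqrt_mul (by positivity)]
  calc C₁ / (2 * Real.sqrt (Real.log 2)) * Real.sqrt ((k:ℝ) * Real.log d)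
      ≤ C₁ / (2 * Real.sqrt (Real.log 2)) * (2 * ℓ * (Real.sqrt m * Real.sqrt (Real.log 2))) := by
        apply mul_le_mul_of_nonneg_left hsq (by positivity)
    _ = (ℓ:ℝ) * (C₁ * Real.sqrt m) := by field_simp
    _ ≤ (ℓ:ℝ) * V m 2 := mul_le_mul_of_nonneg_left h2 (by positivity)
    _ ≤ V k d := h1
end
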